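/- arXiv:2507.09520 — 4 statements merged into one kernel-verified Lean document; each statement's English description precedes it below -/
import Mathlib

section
/- There exists a (necessarily unique) polynomial N ∈ R with D = x_e · x_f · (1 − q) · N, and the image of N under evaluation of q at 1 equals the combinatorial sum S; that is, D = x_e x_f (1−q) N and N|_{q=1} = Σ over disjoint pairs (β,γ) of subsets of E^{ef} of x^β x^γ Σ_{d ∈ B_{β,γ}} x^d. -/
open Finset

section Defs

variable {V : Type*} {E : Type*}

/-- The graph on vertex set `V` whose adjacency is given by the edges in `F`
(a loop joins nothing). -/
def etaGraph (ends : E → Sym2 V) (F : Finset E) : SimpleGraph V where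
  Adj v w := v ≠ w ∧ ∃ g ∈ F, ends g = s(v, w)
  symm := by
    constructor
    rintro v w ⟨hvw, g, hg, hends⟩
    exact ⟨hvw.symm, g, hg, by rw [hends, Sym2.eq_swap]⟩
  loopless := by constructor; rintro v ⟨h, -⟩; exact h rfl

/-- `k(F)`: the number of connected components of `η(F)`. -/
noncomputable def kComp (ends : E → Sym2 V) (F : Finset E) : ℕ :=
  Nat.card (etaGraph ends F).ConnectedComponent

/-- The edge with endpoint pair `s` joins the connected component of `a`
with that of `b` in the graph `G`. -/
def Joins (G : SimpleGraph V) (s : Sym2 V) (a b : V) : Prop :=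
  ∃ u v : V, s = s(u, v) ∧ G.Reachable a u ∧ G.Reachable b v

/-- `F ⊆ E^{ef}` is a paracel if `e` and `f` each join the same two distinct
connected components of `η(F)`. -/
def IsParacel (ends : E → Sym2 V) (e f : E) (F : Finset E) : Prop :=
  e ∉ F ∧ f ∉ F ∧ ∃ a b : V,
    ¬ (etaGraph ends F).Reachable a b ∧
    Joins (etaGraph ends F) (ends e) a b ∧
    Joins (etaGraph ends F) (ends f) a b

/-- `g ∈ E^{ef} ∖ F` is a smoot for the paracel `F` if it joins the same two
connected components of `η(F)` as `e` and `f` do. -/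
def IsSmoot (ends : E → Sym2 V) (e f : E) (F : Finset E) (g : E) : Prop :=
  g ∉ F ∧ g ≠ e ∧ g ≠ f ∧ ∃ a b : V,
    ¬ (etaGraph ends F).Reachable a b ∧
    Joins (etaGraph ends F) (ends e) a b ∧
    Joins (etaGraph ends F) (ends f) a b ∧
    Joins (etaGraph ends F) (ends g) a b

variable [DecidableEq E]

/-- `α` is compatible with `(β, γ)`. -/
def Compatible (ends : E → Sym2 V) (e f : E) (β γ α : Finset E) : Prop :=
  e ∉ α ∧ f ∉ α ∧ Disjoint α β ∧ Disjoint α γ ∧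
    IsParacel ends e f (γ ∪ α) ∧ ∀ g ∈ β, IsSmoot ends e f (γ ∪ α) g

/-- indicator function of a finite edge set, as an exponent vector. -/
def indic (A : Finset E) : E → ℕ := fun g => if g ∈ A then 1 else 0

/-- `B_{β,γ}` as a set of exponent vectors `1_α + 1_{α'}` for twins `α, α'`. -/
def Bset (ends : E → Sym2 V) (e f : E) (β γ : Finset E) : Set (E → ℕ) :=
  { d | ∃ α α' : Finset E,
      Compatible ends e f β γ α ∧ Compatible ends e f β γ α' ∧
      Compatible ends e f β γ (α ∩ α') ∧ d = indic α + indic α' }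

/-- `x^F = ∏_{g ∈ F} x_g`. -/
noncomputable def xF (A : Finset E) : MvPolynomial E ℤ := ∏ g ∈ A, MvPolynomial.X g

variable [Fintype E]

/-- `E^{ef} = E ∖ {e, f}`. -/
def Eef (e f : E) : Finset E := Finset.univ \ {e, f}

/-- `x^d = ∏_g x_g^{d g}` for an exponent vector `d`. -/
noncomputable def xPow (d : E → ℕ) : MvPolynomial E ℤ := ∏ g : E, MvPolynomial.X g ^ d g

/-- `B_{β,γ}` as a finite set of exponent vectors, each counted once. -/
noncomputable def Bfin (ends : E → Sym2 V) (e f : E) (β γ : Finset E) :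
    Finset (E → ℕ) := by
  classical
  exact (Finset.univ.filter (fun p : Finset E × Finset E =>
      Compatible ends e f β γ p.1 ∧ Compatible ends e f β γ p.2 ∧
      Compatible ends e f β γ (p.1 ∩ p.2))).image fun p => indic p.1 + indic p.2

/-- `T_A^B = Σ_{A ⊆ F, F ∩ B = ∅} x^F q^{k(F)}` in `R = (MvPolynomial E ℤ)[q]`. -/
noncomputable def Tab (ends : E → Sym2 V) (A B : Finset E) :
    Polynomial (MvPolynomial E ℤ) :=
  ∑ F ∈ Finset.univ.filter (fun F : Finset E => A ⊆ F ∧ F ∩ B = ∅),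
    Polynomial.C (xF F) * Polynomial.X ^ kComp ends F

/-- `D = T_e^f T_f^e − T_{ef} T^{ef}`. -/
noncomputable def Dpoly (ends : E → Sym2 V) (e f : E) :
    Polynomial (MvPolynomial E ℤ) :=
  Tab ends {e} {f} * Tab ends {f} {e} - Tab ends {e, f} ∅ * Tab ends ∅ {e, f}

/-- The combinatorial sum
`S = Σ_{(β,γ) disjoint ⊆ E^{ef}} x^β x^γ Σ_{d ∈ B_{β,γ}} x^d`. -/
noncomputable def Ssum (ends : E → Sym2 V) (e f : E) : MvPolynomial E ℤ := by
  classical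
  exact ∑ p ∈ Finset.univ.filter (fun p : Finset E × Finset E =>
      p.1 ⊆ Eef e f ∧ p.2 ⊆ Eef e f ∧ Disjoint p.1 p.2),
    xF p.1 * xF p.2 * ∑ d ∈ Bfin ends e f p.1 p.2, xPow d

/-- `k₁(A,B) = k(A+e) + k(B+f)`. -/
noncomputable def kOne (ends : E → Sym2 V) (e f : E) (A B : Finset E) : ℕ :=
  kComp ends (insert e A) + kComp ends (insert f B)

/-- `k₂(A,B) = k(A+e+f) + k(B)`. -/
noncomputable def kTwo (ends : E → Sym2 V) (e f : E) (A B : Finset E) : ℕ :=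
  kComp ends (insert f (insert e A)) + kComp ends B

/-- The coefficient of the monomial `x^lam` in an element of
`(MvPolynomial E ℤ)[q]`, as an element of `ℤ[q]`. -/
noncomputable def monCoeff (P : Polynomial (MvPolynomial E ℤ)) (lam : E →₀ ℕ) :
    Polynomial ℤ :=
  P.sum fun n c => Polynomial.C (MvPolynomial.coeff lam c) * Polynomial.X ^ n

end Defs

section GraphAux

open SimpleGraph

variable {V : Type*} {E : Type*}

lemma sym2_exists_rep (s : Sym2 V) : ∃ u v : V, s = s(u, v) := by
  induction s using Sym2.ind with
  | _ u v => exact ⟨u, v, rfl⟩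

lemma etaGraph_le {ends : E → Sym2 V} {F F' : Finset E} (h : F ⊆ F') :
    etaGraph ends F ≤ etaGraph ends F' := by
  rintro v w ⟨hvw, g, hg, hends⟩
  exact ⟨hvw, g, h hg, hends⟩

lemma adj_insert [DecidableEq E] {ends : E → Sym2 V} {g : E} {F : Finset E} {x y : V} :
    (etaGraph ends (insert g F)).Adj x y ↔
      (etaGraph ends F).Adj x y ∨ (x ≠ y ∧ ends g = s(x, y)) := by
  constructor
  · rintro ⟨hxy, h, hh, he⟩
    rcases Finset.mem_insert.mp hh with rfl | hh
    · exact Or.inr ⟨hxy, he⟩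
    · exact Or.inl ⟨hxy, h, hh, he⟩
  · rintro (⟨hxy, h, hh, he⟩ | ⟨hxy, he⟩)
    · exact ⟨hxy, h, Finset.mem_insert_of_mem hh, he⟩
    · exact ⟨hxy, g, Finset.mem_insert_self _ _, he⟩

lemma reach_in_closed {G : SimpleGraph V} (C : Set V)
    (hC : ∀ x y, x ∈ C → G.Adj x y → y ∈ C) {a b : V} (h : G.Reachable a b)
    (ha : a ∈ C) : b ∈ C := by
  obtain ⟨w⟩ := h
  induction w with
  | nil => exact ha
  | cons h' p ih => exact ih (hC _ _ ha h')

lemma reach_insert_iff [DecidableEq E] {ends : E → Sym2 V} {g : E} {F : Finset E} {u v : V}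
    (hg : ends g = s(u, v)) {a b : V} :
    (etaGraph ends (insert g F)).Reachable a b ↔
      (etaGraph ends F).Reachable a b ∨
      ((etaGraph ends F).Reachable a u ∧ (etaGraph ends F).Reachable b v) ∨
      ((etaGraph ends F).Reachable a v ∧ (etaGraph ends F).Reachable b u) := by
  set G := etaGraph ends F with hG
  constructor
  · intro h
    obtain ⟨w⟩ := h
    induction w with
    | nil => exact Or.inl (Reachable.refl _)
    | @cons a c b' h' p ih =>
      have step : G.Reachable a c ∨ ((a = u ∧ c = v) ∨ (a = v ∧ c = u)) := by
        rcases adj_insert.mp h' with h'' | ⟨hne, he⟩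
        · exact Or.inl h''.reachable
        · rw [hg] at he
          rcases Sym2.eq_iff.mp he with ⟨h1, h2⟩ | ⟨h1, h2⟩
          · exact Or.inr (Or.inl ⟨h1.symm, h2.symm⟩)
          · exact Or.inr (Or.inr ⟨h2.symm, h1.symm⟩)
      rcases step with hac | ⟨rfl, rfl⟩ | ⟨rfl, rfl⟩
      · rcases ih with h1 | ⟨h1, h2⟩ | ⟨h1, h2⟩
        · exact Or.inl (hac.trans h1)
        · exact Or.inr (Or.inl ⟨hac.trans h1, h2⟩)
        · exact Or.inr (Or.inr ⟨hac.trans h1, h2⟩)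
      · rcases ih with h1 | ⟨h1, h2⟩ | ⟨h1, h2⟩
        · exact Or.inr (Or.inl ⟨Reachable.refl _, h1.symm⟩)
        · exact Or.inl ((h2.trans h1).symm)
        · exact Or.inl h2.symm
      · rcases ih with h1 | ⟨h1, h2⟩ | ⟨h1, h2⟩
        · exact Or.inr (Or.inr ⟨Reachable.refl _, h1.symm⟩)
        · exact Or.inl h2.symm
        · exact Or.inl ((h2.trans h1).symm)
  · have hmono : ∀ {x y : V}, G.Reachable x y →
        (etaGraph ends (insert g F)).Reachable x y := fun h =>
      h.mono (etaGraph_le (Finset.subset_insert _ _))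
    have huv : (etaGraph ends (insert g F)).Reachable u v := by
      by_cases h : u = v
      · exact h ▸ Reachable.refl _
      · exact (Adj.reachable ⟨h, g, Finset.mem_insert_self _ _, hg⟩)
    rintro (h | ⟨h1, h2⟩ | ⟨h1, h2⟩)
    · exact hmono h
    · exact ((hmono h1).trans huv).trans (hmono h2).symm
    · exact ((hmono h1).trans huv.symm).trans (hmono h2).symm

end GraphAux
section KCompAux

open SimpleGraph

variable {V : Type*} {E : Type*} [Fintype V] [DecidableEq E]

lemma finite_cc (G : SimpleGraph V) : Finite G.ConnectedComponent :=
  Finite.of_surjective G.connectedComponentMk (fun c => c.exists_rep)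

lemma kComp_insert_of_reach {ends : E → Sym2 V} {g : E} {F : Finset E} {u v : V}
    (hg : ends g = s(u, v)) (h : (etaGraph ends F).Reachable u v) :
    kComp ends (insert g F) = kComp ends F := by
  set G := etaGraph ends F
  set G' := etaGraph ends (insert g F)
  have hle : G ≤ G' := etaGraph_le (Finset.subset_insert _ _)
  refine (Nat.card_congr (Equiv.ofBijective
    (ConnectedComponent.map (SimpleGraph.Hom.ofLE hle)) ⟨?_, ?_⟩)).symm
  · intro c c'
    refine ConnectedComponent.ind₂ (fun a b hab => ?_) c c'
    simp only [ConnectedComponent.map_mk] at hab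
    have hr : G'.Reachable a b := ConnectedComponent.exact hab
    apply ConnectedComponent.sound
    rcases (reach_insert_iff hg).mp hr with h1 | ⟨h1, h2⟩ | ⟨h1, h2⟩
    · exact h1
    · exact (h1.trans h).trans h2.symm
    · exact (h1.trans h.symm).trans h2.symm
  · intro c'
    refine ConnectedComponent.ind (fun a => ?_) c'
    exact ⟨G.connectedComponentMk a, rfl⟩

lemma kComp_insert_of_not_reach {ends : E → Sym2 V} {g : E} {F : Finset E} {u v : V}
    (hg : ends g = s(u, v)) (h : ¬ (etaGraph ends F).Reachable u v) :
    kComp ends F = kComp ends (insert g F) + 1 := by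
  classical
  set G := etaGraph ends F with hGdef
  set G' := etaGraph ends (insert g F) with hG'def
  have hle : G ≤ G' := etaGraph_le (Finset.subset_insert _ _)
  have huv : u ≠ v := fun h' => h (h' ▸ Reachable.refl u)
  haveI : Finite G.ConnectedComponent := finite_cc G
  haveI : Finite G'.ConnectedComponent := finite_cc G'
  -- the lifted map ψ : CC G' → CC G
  set ψ₀ : V → G.ConnectedComponent := fun a =>
    if G.Reachable a v then G.connectedComponentMk u else G.connectedComponentMk a with hψ₀
  have hcongr : ∀ a b : V, G'.Reachable a b → ψ₀ a = ψ₀ b := by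
    intro a b hr
    rcases (reach_insert_iff hg).mp hr with h1 | ⟨h1, h2⟩ | ⟨h1, h2⟩
    · by_cases hav : G.Reachable a v
      · rw [hψ₀]; simp only [if_pos hav, if_pos (show G.Reachable b v from h1.symm.trans hav)]
      · rw [hψ₀]
        simp only [if_neg hav, if_neg (fun hbv : G.Reachable b v => hav (h1.trans hbv))]
        exact ConnectedComponent.sound h1
    · have hav : ¬ G.Reachable a v := fun hav => h (h1.symm.trans hav)
      rw [hψ₀]; simp only [if_neg hav, if_pos (show G.Reachable b v from h2)]
      exact ConnectedComponent.sound h1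
    · have hbv : ¬ G.Reachable b v := fun hbv => h (h2.symm.trans hbv)
      rw [hψ₀]; simp only [if_pos (show G.Reachable a v from h1), if_neg hbv]
      exact (ConnectedComponent.sound h2).symm
  set ψ : G'.ConnectedComponent → G.ConnectedComponent :=
    ConnectedComponent.lift ψ₀ (fun a b p _ => hcongr a b ⟨p⟩) with hψ
  have hψmk : ∀ a : V, ψ (G'.connectedComponentMk a) = ψ₀ a := fun a =>
    ConnectedComponent.lift_mk
  have hne : ∀ c', ψ c' ≠ G.connectedComponentMk v := by
    intro c'
    refine ConnectedComponent.ind (fun a => ?_) c'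
    rw [hψmk, hψ₀]
    by_cases hav : G.Reachable a v
    · simp only [if_pos hav]
      exact fun hc => h (ConnectedComponent.exact hc)
    · simp only [if_neg hav]
      exact fun hc => hav (ConnectedComponent.exact hc)
  set φ : G.ConnectedComponent → G'.ConnectedComponent :=
    ConnectedComponent.map (SimpleGraph.Hom.ofLE hle) with hφ
  have hφmk : ∀ a : V, φ (G.connectedComponentMk a) = G'.connectedComponentMk a :=
    fun a => rfl
  have hequiv : { c : G.ConnectedComponent // c ≠ G.connectedComponentMk v } ≃
      G'.ConnectedComponent := by
    refine ⟨fun c => φ c.1, fun c' => ⟨ψ c', hne c'⟩, ?_, ?_⟩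
    · rintro ⟨c, hc⟩
      refine Subtype.ext ?_
      revert hc
      refine ConnectedComponent.ind (fun a hc => ?_) c
      show ψ (φ (G.connectedComponentMk a)) = G.connectedComponentMk a
      rw [hφmk, hψmk, hψ₀]
      have hav : ¬ G.Reachable a v := fun hav => hc (ConnectedComponent.sound hav)
      simp only [if_neg hav]
    · intro c'
      refine ConnectedComponent.ind (fun a => ?_) c'
      show φ (ψ (G'.connectedComponentMk a)) = G'.connectedComponentMk a
      rw [hψmk, hψ₀]
      by_cases hav : G.Reachable a v
      · simp only [if_pos hav]
        rw [hφmk]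
        apply ConnectedComponent.sound
        have h1 : G'.Reachable u v := Adj.reachable ⟨huv, g, Finset.mem_insert_self _ _, hg⟩
        exact h1.trans (hav.mono hle).symm
      · simp only [if_neg hav]
        rw [hφmk]
  have h1 : kComp ends F =
      Nat.card { c : G.ConnectedComponent // c ≠ G.connectedComponentMk v } + 1 := by
    have := Nat.card_congr (Equiv.optionSubtypeNe (G.connectedComponentMk v)).symm
    rw [kComp]
    rw [this, Finite.card_option]
  rw [h1, Nat.card_congr hequiv]
  rfl

end KCompAux
section ParacelAux

open SimpleGraph

variable {V : Type*} {E : Type*}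

lemma joins_mono {G G' : SimpleGraph V} (hle : G ≤ G') {s : Sym2 V} {a b : V}
    (h : Joins G s a b) : Joins G' s a b := by
  obtain ⟨p, q, hs, hp, hq⟩ := h
  exact ⟨p, q, hs, hp.mono hle, hq.mono hle⟩

lemma joins_transfer {G : SimpleGraph V} {u v a b : V}
    (hru : (G.Reachable a u ∧ G.Reachable b v) ∨ (G.Reachable a v ∧ G.Reachable b u))
    {s : Sym2 V} (h : Joins G s a b) : Joins G s u v := by
  obtain ⟨p, q, hs, hp, hq⟩ := h
  rcases hru with ⟨h1, h2⟩ | ⟨h1, h2⟩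
  · exact ⟨p, q, hs, h1.symm.trans hp, h2.symm.trans hq⟩
  · exact ⟨q, p, by rw [hs, Sym2.eq_swap], h2.symm.trans hq, h1.symm.trans hp⟩

/-- Normalization: a witness pair for `Joins` of an edge with endpoints `u, v`
can be replaced by `u, v` themselves. -/
lemma joins_normalize {G : SimpleGraph V} {u v a b : V} {se : Sym2 V} (hse : se = s(u, v))
    (hab : ¬ G.Reachable a b) (hj : Joins G se a b) :
    ¬ G.Reachable u v ∧
      ((G.Reachable a u ∧ G.Reachable b v) ∨ (G.Reachable a v ∧ G.Reachable b u)) := by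
  obtain ⟨p, q, hs, hp, hq⟩ := hj
  rw [hse] at hs
  have horient : (G.Reachable a u ∧ G.Reachable b v) ∨
      (G.Reachable a v ∧ G.Reachable b u) := by
    rcases Sym2.eq_iff.mp hs with ⟨h1, h2⟩ | ⟨h1, h2⟩
    · exact Or.inl ⟨h1 ▸ hp, h2 ▸ hq⟩
    · exact Or.inr ⟨h2 ▸ hp, h1 ▸ hq⟩
  refine ⟨fun huv => hab ?_, horient⟩
  rcases horient with ⟨h1, h2⟩ | ⟨h1, h2⟩
  · exact (h1.trans huv).trans h2.symm
  · exact (h1.trans huv.symm).trans h2.symm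

/-- Canonical form of the paracel condition in terms of the endpoints of `e`. -/
lemma isParacel_iff {ends : E → Sym2 V} {e f : E} {u v : V} (hgu : ends e = s(u, v))
    {B : Finset E} :
    IsParacel ends e f B ↔ e ∉ B ∧ f ∉ B ∧ ¬ (etaGraph ends B).Reachable u v ∧
      Joins (etaGraph ends B) (ends f) u v := by
  constructor
  · rintro ⟨he, hf, a, b, hab, hje, hjf⟩
    obtain ⟨huv, horient⟩ := joins_normalize hgu hab hje
    exact ⟨he, hf, huv, joins_transfer horient hjf⟩
  · rintro ⟨he, hf, huv, hjf⟩
    exact ⟨he, hf, u, v, huv, ⟨u, v, hgu, Reachable.refl _, Reachable.refl _⟩, hjf⟩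

/-- Canonical form of the smoot condition in terms of the endpoints of `e`. -/
lemma isSmoot_iff {ends : E → Sym2 V} {e f : E} {u v : V} (hgu : ends e = s(u, v))
    {B : Finset E} {g : E} :
    IsSmoot ends e f B g ↔ g ∉ B ∧ g ≠ e ∧ g ≠ f ∧ ¬ (etaGraph ends B).Reachable u v ∧
      Joins (etaGraph ends B) (ends f) u v ∧ Joins (etaGraph ends B) (ends g) u v := by
  constructor
  · rintro ⟨hgB, hge, hgf, a, b, hab, hje, hjf, hjg⟩
    obtain ⟨huv, horient⟩ := joins_normalize hgu hab hje
    exact ⟨hgB, hge, hgf, huv, joins_transfer horient hjf, joins_transfer horient hjg⟩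
  · rintro ⟨hgB, hge, hgf, huv, hjf, hjg⟩
    exact ⟨hgB, hge, hgf, u, v, huv,
      ⟨u, v, hgu, Reachable.refl _, Reachable.refl _⟩, hjf, hjg⟩

/-- If `B ⊆ B'` and the edge set `B'` contains an edge joining (in `η B`) the two
endpoint components of a pair `u v`, then `u, v` are connected in `η B'`. -/
lemma reach_of_joins_mem {ends : E → Sym2 V} {B B' : Finset E} (hBB' : B ⊆ B') {g : E}
    (hgB' : g ∈ B') {u v : V} (hj : Joins (etaGraph ends B) (ends g) u v) :
    (etaGraph ends B').Reachable u v := by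
  obtain ⟨p, q, hs, hp, hq⟩ := hj
  have hle := etaGraph_le (ends := ends) hBB'
  have hpq : (etaGraph ends B').Reachable p q := by
    by_cases hpq' : p = q
    · exact hpq' ▸ Reachable.refl _
    · exact Adj.reachable ⟨hpq', g, hgB', hs⟩
  exact ((hp.mono hle).trans hpq).trans (hq.mono hle).symm

end ParacelAux

section KeyCount

open SimpleGraph

variable {V : Type*} {E : Type*} [Fintype V] [DecidableEq E]

open Classical in
/-- The key local counting identity. -/
lemma key_count (ends : E → Sym2 V) (e f : E) (hef : e ≠ f) {B : Finset E}
    (he : e ∉ B) (hf : f ∉ B) :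
    (kComp ends (insert f (insert e B)) : ℤ) + kComp ends B
      - kComp ends (insert e B) - kComp ends (insert f B)
    = if IsParacel ends e f B then 1 else 0 := by
  classical
  obtain ⟨u, v, hgu⟩ := sym2_exists_rep (ends e)
  obtain ⟨p, q, hfq⟩ := sym2_exists_rep (ends f)
  by_cases hpq : (etaGraph ends B).Reachable p q
  · -- endpoints of f already connected: everything cancels, no paracel
    have h1 : kComp ends (insert f B) = kComp ends B := kComp_insert_of_reach hfq hpq
    have h2 : kComp ends (insert f (insert e B)) = kComp ends (insert e B) :=
      kComp_insert_of_reach hfq (hpq.mono (etaGraph_le (Finset.subset_insert _ _)))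
    have hnp : ¬ IsParacel ends e f B := by
      rintro ⟨-, -, a, b, hab, -, hjf⟩
      exact (joins_normalize hfq hab hjf).1 hpq
    rw [h1, h2, if_neg hnp]; push_cast; ring
  · have h1 : kComp ends B = kComp ends (insert f B) + 1 :=
      kComp_insert_of_not_reach hfq hpq
    by_cases hpq' : (etaGraph ends (insert e B)).Reachable p q
    · -- f's endpoints get connected by adding e : paracel, value 1
      have h2 : kComp ends (insert f (insert e B)) = kComp ends (insert e B) :=
        kComp_insert_of_reach hfq hpq'
      have hpar : IsParacel ends e f B := by
        rcases (reach_insert_iff hgu).mp hpq' with h3 | ⟨h3, h4⟩ | ⟨h3, h4⟩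
        · exact absurd h3 hpq
        · refine (isParacel_iff hgu).mpr ⟨he, hf, ?_, p, q, hfq, h3.symm, h4.symm⟩
          intro huv
          exact hpq ((h3.trans huv).trans h4.symm)
        · refine (isParacel_iff hgu).mpr ⟨he, hf, ?_, q, p, by rw [hfq, Sym2.eq_swap],
            h4.symm, h3.symm⟩
          intro huv
          exact hpq ((h3.trans huv.symm).trans h4.symm)
      rw [h1, h2, if_pos hpar]; push_cast; ring
    · -- f's endpoints stay disconnected: everything cancels, no paracel
      have h2 : kComp ends (insert e B) = kComp ends (insert f (insert e B)) + 1 :=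
        kComp_insert_of_not_reach hfq hpq'
      have hnp : ¬ IsParacel ends e f B := by
        intro hpar
        obtain ⟨-, -, huv, hjf⟩ := (isParacel_iff hgu).mp hpar
        apply hpq'
        have hje : Joins (etaGraph ends B) (ends e) u v :=
          ⟨u, v, hgu, SimpleGraph.Reachable.refl _, SimpleGraph.Reachable.refl _⟩
        have huv' : (etaGraph ends (insert e B)).Reachable u v :=
          reach_of_joins_mem (Finset.subset_insert _ _) (Finset.mem_insert_self _ _) hje
        obtain ⟨p', q', hs, hp', hq'⟩ := hjf
        have hle := etaGraph_le (ends := ends) (Finset.subset_insert e B)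
        have hr : (etaGraph ends (insert e B)).Reachable p' q' :=
          (hp'.mono hle).symm.trans (huv'.trans (hq'.mono hle))
        rw [hfq] at hs
        rcases Sym2.eq_iff.mp hs with ⟨rfl, rfl⟩ | ⟨rfl, rfl⟩
        · exact hr
        · exact hr.symm
      rw [h1, h2, if_neg hnp]; push_cast; ring
  done

end KeyCount
section AlgAux

variable {E : Type*} [DecidableEq E]

lemma mem_Eef [Fintype E] {e f g : E} : g ∈ Eef e f ↔ g ≠ e ∧ g ≠ f := by
  simp [Eef, not_or]

lemma subset_Eef_iff [Fintype E] {e f : E} {F : Finset E} :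
    F ⊆ Eef e f ↔ e ∉ F ∧ f ∉ F := by
  constructor
  · intro h
    constructor <;> intro hmem
    · exact (mem_Eef.mp (h hmem)).1 rfl
    · exact (mem_Eef.mp (h hmem)).2 rfl
  · rintro ⟨he, hf⟩ g hg
    exact mem_Eef.mpr ⟨fun h => he (h ▸ hg), fun h => hf (h ▸ hg)⟩

lemma inter_singleton_empty {f : E} {F : Finset E} : F ∩ {f} = ∅ ↔ f ∉ F := by
  simp [Finset.eq_empty_iff_forall_notMem]

lemma inter_pair_empty {e f : E} {F : Finset E} :
    F ∩ {e, f} = ∅ ↔ e ∉ F ∧ f ∉ F := by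
  simp [Finset.eq_empty_iff_forall_notMem, not_or]
  constructor
  · intro h
    exact ⟨fun he => (h e he).1 rfl, fun hf => (h f hf).2 rfl⟩
  · rintro ⟨he, hf⟩ g hg
    exact ⟨fun h => he (h ▸ hg), fun h => hf (h ▸ hg)⟩

lemma xF_insert {e : E} {A : Finset E} (h : e ∉ A) :
    xF (insert e A) = MvPolynomial.X e * xF A := Finset.prod_insert h

lemma xPow_add [Fintype E] (d₁ d₂ : E → ℕ) :
    xPow (E := E) (d₁ + d₂) = xPow d₁ * xPow d₂ := by
  rw [xPow, xPow, xPow, ← Finset.prod_mul_distrib]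
  exact Finset.prod_congr rfl fun g _ => by rw [Pi.add_apply, pow_add]

lemma xPow_indic [Fintype E] (A : Finset E) : xPow (indic A) = xF A := by
  rw [xPow, xF]
  have h : ∀ g : E, (MvPolynomial.X g : MvPolynomial E ℤ) ^ (indic A g)
      = if g ∈ A then MvPolynomial.X g else 1 := by
    intro g; rw [indic]; split <;> simp
  rw [Finset.prod_congr rfl fun g _ => h g, Finset.prod_ite_mem, Finset.univ_inter]

lemma Eef_comm [Fintype E] (e f : E) : Eef f e = Eef e f := by
  rw [Eef, Eef, Finset.pair_comm]

end AlgAux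

section TabAux

variable {V : Type*} {E : Type*} [Fintype V] [Fintype E] [DecidableEq E]

lemma Tab_single (ends : E → Sym2 V) {e f : E} (hef : e ≠ f) :
    Tab ends {e} {f} = Polynomial.C (MvPolynomial.X e) *
      ∑ A ∈ (Eef e f).powerset,
        Polynomial.C (xF A) * Polynomial.X ^ kComp ends (insert e A) := by
  rw [Tab, Finset.mul_sum]
  refine Finset.sum_nbij' (fun F => F.erase e) (fun A => insert e A) ?_ ?_ ?_ ?_ ?_
  · intro F hF
    simp only [Finset.mem_filter, Finset.mem_univ, true_and,
      Finset.singleton_subset_iff, inter_singleton_empty] at hF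
    obtain ⟨heF, hfF⟩ := hF
    rw [Finset.mem_powerset]
    intro g hg
    obtain ⟨hge, hgF⟩ := Finset.mem_erase.mp hg
    exact mem_Eef.mpr ⟨hge, fun h => hfF (h ▸ hgF)⟩
  · intro A hA
    rw [Finset.mem_powerset] at hA
    obtain ⟨heA, hfA⟩ := subset_Eef_iff.mp hA
    simp only [Finset.mem_filter, Finset.mem_univ, true_and,
      Finset.singleton_subset_iff, inter_singleton_empty]
    exact ⟨Finset.mem_insert_self _ _,
      fun h => (Finset.mem_insert.mp h).elim (fun h' => hef h'.symm) hfA⟩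
  · intro F hF
    simp only [Finset.mem_filter, Finset.mem_univ, true_and,
      Finset.singleton_subset_iff, inter_singleton_empty] at hF
    exact Finset.insert_erase hF.1
  · intro A hA
    rw [Finset.mem_powerset] at hA
    exact Finset.erase_insert (subset_Eef_iff.mp hA).1
  · intro F hF
    simp only [Finset.mem_filter, Finset.mem_univ, true_and,
      Finset.singleton_subset_iff, inter_singleton_empty] at hF
    have hk := Finset.insert_erase hF.1
    have hx : xF F = MvPolynomial.X e * xF (F.erase e) := by
      conv_lhs => rw [← hk]
      exact xF_insert (Finset.notMem_erase _ _)
    rw [hk, hx, map_mul]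
    ring

lemma Tab_pair (ends : E → Sym2 V) {e f : E} (hef : e ≠ f) :
    Tab ends {e, f} ∅ = Polynomial.C (MvPolynomial.X e * MvPolynomial.X f) *
      ∑ A ∈ (Eef e f).powerset,
        Polynomial.C (xF A) * Polynomial.X ^ kComp ends (insert f (insert e A)) := by
  rw [Tab, Finset.mul_sum]
  have hins : ∀ A : Finset E, A ⊆ Eef e f → insert f (insert e A) \ {e, f} = A := by
    intro A hA
    obtain ⟨heA, hfA⟩ := subset_Eef_iff.mp hA
    ext g
    simp only [Finset.mem_sdiff, Finset.mem_insert, Finset.mem_singleton, not_or]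
    constructor
    · rintro ⟨rfl | rfl | hg, hge, hgf⟩
      · exact absurd rfl hgf
      · exact absurd rfl hge
      · exact hg
    · intro hg
      exact ⟨Or.inr (Or.inr hg), fun h => heA (h ▸ hg), fun h => hfA (h ▸ hg)⟩
  have hins2 : ∀ F : Finset E, e ∈ F → f ∈ F → insert f (insert e (F \ {e, f})) = F := by
    intro F heF hfF
    ext g
    simp only [Finset.mem_insert, Finset.mem_sdiff, Finset.mem_singleton, not_or]
    constructor
    · rintro (rfl | rfl | ⟨hg, -, -⟩) <;> assumption
    · intro hg
      by_cases h1 : g = f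
      · exact Or.inl h1
      · by_cases h2 : g = e
        · exact Or.inr (Or.inl h2)
        · exact Or.inr (Or.inr ⟨hg, h2, h1⟩)
  refine Finset.sum_nbij' (fun F => F \ {e, f}) (fun A => insert f (insert e A)) ?_ ?_ ?_ ?_ ?_
  · intro F hF
    simp only [Finset.mem_filter, Finset.mem_univ, true_and, Finset.insert_subset_iff,
      Finset.singleton_subset_iff] at hF
    rw [Finset.mem_powerset]
    intro g hg
    rw [Finset.mem_sdiff, Finset.mem_insert, Finset.mem_singleton] at hg
    exact mem_Eef.mpr ⟨fun h => hg.2 (Or.inl h), fun h => hg.2 (Or.inr h)⟩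
  · intro A hA
    rw [Finset.mem_powerset] at hA
    obtain ⟨heA, hfA⟩ := subset_Eef_iff.mp hA
    simp only [Finset.mem_filter, Finset.mem_univ, true_and, Finset.insert_subset_iff,
      Finset.singleton_subset_iff, Finset.inter_empty, and_true]
    exact ⟨Finset.mem_insert_of_mem (Finset.mem_insert_self _ _), Finset.mem_insert_self _ _⟩
  · intro F hF
    simp only [Finset.mem_filter, Finset.mem_univ, true_and, Finset.insert_subset_iff,
      Finset.singleton_subset_iff] at hF
    exact hins2 F hF.1.1 hF.1.2
  · intro A hA
    rw [Finset.mem_powerset] at hA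
    exact hins A hA
  · intro F hF
    simp only [Finset.mem_filter, Finset.mem_univ, true_and, Finset.insert_subset_iff,
      Finset.singleton_subset_iff] at hF
    obtain ⟨⟨heF, hfF⟩, -⟩ := hF
    have h1 : f ∉ insert e (F \ {e, f}) := by
      intro hmem
      rcases Finset.mem_insert.mp hmem with h | h
      · exact hef h.symm
      · exact (Finset.mem_sdiff.mp h).2 (by simp)
    have h2 : e ∉ F \ {e, f} := fun h => (Finset.mem_sdiff.mp h).2 (by simp)
    have hk := hins2 F heF hfF
    have hx : xF F = MvPolynomial.X f * (MvPolynomial.X e * xF (F \ {e, f})) := by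
      conv_lhs => rw [← hk]
      rw [xF_insert h1, xF_insert h2]
    rw [hk, hx]
    simp only [map_mul]
    ring

lemma Tab_empty (ends : E → Sym2 V) {e f : E} :
    Tab ends ∅ {e, f} = ∑ A ∈ (Eef e f).powerset,
        Polynomial.C (xF A) * Polynomial.X ^ kComp ends A := by
  rw [Tab]
  apply Finset.sum_congr
  · ext F
    simp only [Finset.mem_filter, Finset.mem_univ, true_and, Finset.empty_subset,
      inter_pair_empty, Finset.mem_powerset, subset_Eef_iff]
  · intros; rfl

end TabAux
section StarAux

open SimpleGraph

variable {V : Type*} {E : Type*} [Fintype V] [Fintype E] [DecidableEq E]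

lemma indic_filter_ne (α α' : Finset E) :
    Finset.univ.filter (fun g => (indic α + indic α') g ≠ 0) = α ∪ α' := by
  ext g
  simp only [Finset.mem_filter, Finset.mem_univ, true_and, Finset.mem_union,
    Pi.add_apply, indic]
  by_cases h1 : g ∈ α <;> by_cases h2 : g ∈ α' <;> simp [h1, h2]

lemma indic_filter_two (α α' : Finset E) :
    Finset.univ.filter (fun g => (indic α + indic α') g = 2) = α ∩ α' := by
  ext g
  rw [Finset.mem_filter]
  simp only [Finset.mem_filter, Finset.mem_univ, true_and, Finset.mem_inter,
    Pi.add_apply, indic]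
  by_cases h1 : g ∈ α <;> by_cases h2 : g ∈ α' <;> simp [h1, h2]

/-- An edge of a paracel cannot be a smoot for a subset of that paracel. -/
lemma not_smoot_of_mem_paracel {ends : E → Sym2 V} {e f g : E} {B' P : Finset E}
    (hBP : B' ⊆ P) (hgP : g ∈ P) (hpar : IsParacel ends e f P)
    (hs : IsSmoot ends e f B' g) : False := by
  obtain ⟨u, v, hgu⟩ := sym2_exists_rep (ends e)
  obtain ⟨-, -, hnuv, -⟩ := (isParacel_iff hgu).mp hpar
  obtain ⟨-, -, -, -, -, hjg⟩ := (isSmoot_iff hgu).mp hs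
  exact hnuv (reach_of_joins_mem hBP hgP hjg)

/-- A smoot of `B` remains a smoot of any paracel `B'` containing `B`. -/
lemma smoot_mono {ends : E → Sym2 V} {e f g : E} {B B' : Finset E} (hBB' : B ⊆ B')
    (hgB' : g ∉ B') (hpar' : IsParacel ends e f B') (hs : IsSmoot ends e f B g) :
    IsSmoot ends e f B' g := by
  obtain ⟨u, v, hgu⟩ := sym2_exists_rep (ends e)
  obtain ⟨-, -, hnuv, hjf⟩ := (isParacel_iff hgu).mp hpar'
  obtain ⟨-, hge, hgf, -, -, hjg⟩ := (isSmoot_iff hgu).mp hs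
  exact (isSmoot_iff hgu).mpr ⟨hgB', hge, hgf, hnuv, hjf,
    joins_mono (etaGraph_le hBB') hjg⟩

open Classical in
/-- The star construction: existence of twins realizing the canonical data of a
pair `(A, B)` with `B` a paracel. -/
lemma star_twins (ends : E → Sym2 V) (e f : E) {A B : Finset E}
    (hA : A ⊆ Eef e f) (hB : B ⊆ Eef e f) (hpar : IsParacel ends e f B) :
    ∃ α α' : Finset E,
      Compatible ends e f ((A \ B).filter (IsSmoot ends e f B)) (B \ A) α ∧
      Compatible ends e f ((A \ B).filter (IsSmoot ends e f B)) (B \ A) α' ∧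
      Compatible ends e f ((A \ B).filter (IsSmoot ends e f B)) (B \ A) (α ∩ α') ∧
      indic α + indic α' = indic (A ∩ B) +
        indic ((A ∩ B) ∪ ((A \ B).filter (fun g => ¬ IsSmoot ends e f B g))) := by
  classical
  obtain ⟨u, v, hgu⟩ := sym2_exists_rep (ends e)
  obtain ⟨heB, hfB, hnuv, hJf⟩ := (isParacel_iff hgu).mp hpar
  set β := (A \ B).filter (IsSmoot ends e f B) with hβ
  set R := (A \ B).filter (fun g => ¬ IsSmoot ends e f B g) with hR
  set R₁ := R.filter (fun g => ∃ p q : V, ends g = s(p, q) ∧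
    (etaGraph ends B).Reachable p u) with hR₁
  set R₂ := R \ R₁ with hR₂
  -- R-edges are in A, outside B
  have hRA : R ⊆ A \ B := Finset.filter_subset _ _
  have hβA : β ⊆ A \ B := Finset.filter_subset _ _
  -- Reachability is unchanged on the components of interest
  have key1 : ¬ (etaGraph ends (B ∪ R₁)).Reachable u v := by
    intro hreach
    have hclosed : ∀ x y : V, (etaGraph ends B).Reachable x v →
        (etaGraph ends (B ∪ R₁)).Adj x y → (etaGraph ends B).Reachable y v := by
      intro x y hx hadj
      obtain ⟨hne, h, hmem, hends⟩ := hadj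
      rcases Finset.mem_union.mp hmem with hhB | hhR₁
      · exact (show (etaGraph ends B).Adj x y from ⟨hne, h, hhB, hends⟩).reachable.symm.trans hx
      · obtain ⟨hhR, p, q, hpq, hpu⟩ := Finset.mem_filter.mp hhR₁
        rw [hends] at hpq
        exfalso
        rcases Sym2.eq_iff.mp hpq with ⟨h1, h2⟩ | ⟨h1, h2⟩
        · subst h1; subst h2
          exact hnuv (hpu.symm.trans hx)
        · subst h1; subst h2
          -- the edge joins the two marked components : it is a smoot, contradiction
          have hhAB := Finset.mem_sdiff.mp (hRA hhR)
          have hsm : IsSmoot ends e f B h := by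
            refine (isSmoot_iff hgu).mpr ⟨hhAB.2, ?_, ?_, hnuv, hJf, ?_⟩
            · exact (mem_Eef.mp (hA hhAB.1)).1
            · exact (mem_Eef.mp (hA hhAB.1)).2
            · exact ⟨y, x, hends.trans Sym2.eq_swap, hpu.symm, hx.symm⟩
          exact (Finset.mem_filter.mp hhR).2 hsm
    have := reach_in_closed {x | (etaGraph ends B).Reachable x v}
      (fun x y hx hadj => hclosed x y hx hadj) hreach.symm (Reachable.refl v)
    exact hnuv this
  have key2 : ¬ (etaGraph ends (B ∪ R₂)).Reachable u v := by
    intro hreach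
    have hclosed : ∀ x y : V, (etaGraph ends B).Reachable x u →
        (etaGraph ends (B ∪ R₂)).Adj x y → (etaGraph ends B).Reachable y u := by
      intro x y hx hadj
      obtain ⟨hne, h, hmem, hends⟩ := hadj
      rcases Finset.mem_union.mp hmem with hhB | hhR₂
      · exact (show (etaGraph ends B).Adj x y from ⟨hne, h, hhB, hends⟩).reachable.symm.trans hx
      · exfalso
        obtain ⟨hhR, hhnR₁⟩ := Finset.mem_sdiff.mp hhR₂
        exact hhnR₁ (Finset.mem_filter.mpr ⟨hhR, x, y, hends, hx⟩)
    have := reach_in_closed {x | (etaGraph ends B).Reachable x u}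
      (fun x y hx hadj => hclosed x y hx hadj) hreach (Reachable.refl u)
    exact hnuv this.symm
  -- both extended sets are paracels
  have hle1 : etaGraph ends B ≤ etaGraph ends (B ∪ R₁) :=
    etaGraph_le Finset.subset_union_left
  have hle2 : etaGraph ends B ≤ etaGraph ends (B ∪ R₂) :=
    etaGraph_le Finset.subset_union_left
  have hRnotef : ∀ g ∈ R, g ≠ e ∧ g ≠ f := by
    intro g hg
    have := hA (Finset.mem_sdiff.mp (hRA hg)).1
    exact mem_Eef.mp this
  have hpar1 : IsParacel ends e f (B ∪ R₁) := by
    refine (isParacel_iff hgu).mpr ⟨?_, ?_, key1, joins_mono hle1 hJf⟩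
    · intro hmem
      rcases Finset.mem_union.mp hmem with h | h
      · exact heB h
      · exact (hRnotef _ (Finset.filter_subset _ _ h)).1 rfl
    · intro hmem
      rcases Finset.mem_union.mp hmem with h | h
      · exact hfB h
      · exact (hRnotef _ (Finset.filter_subset _ _ h)).2 rfl
  have hpar2 : IsParacel ends e f (B ∪ R₂) := by
    refine (isParacel_iff hgu).mpr ⟨?_, ?_, key2, joins_mono hle2 hJf⟩
    · intro hmem
      rcases Finset.mem_union.mp hmem with h | h
      · exact heB h
      · exact (hRnotef _ (Finset.sdiff_subset h)).1 rfl
    · intro hmem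
      rcases Finset.mem_union.mp hmem with h | h
      · exact hfB h
      · exact (hRnotef _ (Finset.sdiff_subset h)).2 rfl
  -- β-edges are smoots of everything involved
  have hβsm : ∀ g ∈ β, IsSmoot ends e f B g := fun g hg => (Finset.mem_filter.mp hg).2
  have hβnR : ∀ g ∈ β, g ∉ R := by
    intro g hg hgR
    exact (Finset.mem_filter.mp hgR).2 (hβsm g hg)
  have hβnB : ∀ g ∈ β, g ∉ B := fun g hg => (Finset.mem_sdiff.mp (hβA hg)).2
  have hβsm1 : ∀ g ∈ β, IsSmoot ends e f (B ∪ R₁) g := by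
    intro g hg
    refine smoot_mono Finset.subset_union_left ?_ hpar1 (hβsm g hg)
    intro hmem
    rcases Finset.mem_union.mp hmem with h | h
    · exact hβnB g hg h
    · exact hβnR g hg (Finset.filter_subset _ _ h)
  have hβsm2 : ∀ g ∈ β, IsSmoot ends e f (B ∪ R₂) g := by
    intro g hg
    refine smoot_mono Finset.subset_union_left ?_ hpar2 (hβsm g hg)
    intro hmem
    rcases Finset.mem_union.mp hmem with h | h
    · exact hβnB g hg h
    · exact hβnR g hg (Finset.sdiff_subset h)
  -- the twins
  refine ⟨(A ∩ B) ∪ R₁, (A ∩ B) ∪ R₂, ?_, ?_, ?_, ?_⟩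
  · -- Compatible α
    have hset : (B \ A) ∪ ((A ∩ B) ∪ R₁) = B ∪ R₁ := by
      ext g
      have hRg : g ∈ R₁ → g ∈ A ∧ g ∉ B := fun h =>
        Finset.mem_sdiff.mp (hRA (Finset.filter_subset _ _ h))
      simp only [Finset.mem_union, Finset.mem_sdiff, Finset.mem_inter]
      tauto
    refine ⟨?_, ?_, ?_, ?_, ?_, ?_⟩
    · intro hmem
      rcases Finset.mem_union.mp hmem with h | h
      · exact (mem_Eef.mp (hA (Finset.mem_inter.mp h).1)).1 rfl
      · exact (hRnotef _ (Finset.filter_subset _ _ h)).1 rfl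
    · intro hmem
      rcases Finset.mem_union.mp hmem with h | h
      · exact (mem_Eef.mp (hA (Finset.mem_inter.mp h).1)).2 rfl
      · exact (hRnotef _ (Finset.filter_subset _ _ h)).2 rfl
    · -- Disjoint α β
      rw [Finset.disjoint_left]
      intro g hg hgβ
      rcases Finset.mem_union.mp hg with h | h
      · exact hβnB g hgβ (Finset.mem_inter.mp h).2
      · exact hβnR g hgβ (Finset.filter_subset _ _ h)
    · -- Disjoint α γ
      rw [Finset.disjoint_left]
      intro g hg hgγ
      obtain ⟨hgB, hgnA⟩ := Finset.mem_sdiff.mp hgγ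
      rcases Finset.mem_union.mp hg with h | h
      · exact hgnA (Finset.mem_inter.mp h).1
      · exact hgnA (Finset.mem_sdiff.mp (hRA (Finset.filter_subset _ _ h))).1
    · rw [hset]; exact hpar1
    · intro g hg; rw [hset]; exact hβsm1 g hg
  · -- Compatible α'
    have hset : (B \ A) ∪ ((A ∩ B) ∪ R₂) = B ∪ R₂ := by
      ext g
      have hRg : g ∈ R₂ → g ∈ A ∧ g ∉ B := fun h =>
        Finset.mem_sdiff.mp (hRA (Finset.sdiff_subset h))
      simp only [Finset.mem_union, Finset.mem_sdiff, Finset.mem_inter]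
      tauto
    refine ⟨?_, ?_, ?_, ?_, ?_, ?_⟩
    · intro hmem
      rcases Finset.mem_union.mp hmem with h | h
      · exact (mem_Eef.mp (hA (Finset.mem_inter.mp h).1)).1 rfl
      · exact (hRnotef _ (Finset.sdiff_subset h)).1 rfl
    · intro hmem
      rcases Finset.mem_union.mp hmem with h | h
      · exact (mem_Eef.mp (hA (Finset.mem_inter.mp h).1)).2 rfl
      · exact (hRnotef _ (Finset.sdiff_subset h)).2 rfl
    · rw [Finset.disjoint_left]
      intro g hg hgβ
      rcases Finset.mem_union.mp hg with h | h
      · exact hβnB g hgβ (Finset.mem_inter.mp h).2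
      · exact hβnR g hgβ (Finset.sdiff_subset h)
    · rw [Finset.disjoint_left]
      intro g hg hgγ
      obtain ⟨hgB, hgnA⟩ := Finset.mem_sdiff.mp hgγ
      rcases Finset.mem_union.mp hg with h | h
      · exact hgnA (Finset.mem_inter.mp h).1
      · exact hgnA (Finset.mem_sdiff.mp (hRA (Finset.sdiff_subset h))).1
    · rw [hset]; exact hpar2
    · intro g hg; rw [hset]; exact hβsm2 g hg
  · -- Compatible (α ∩ α')
    have hRdisj : ∀ g, g ∈ R₁ → g ∈ R₂ → False := by
      intro g h1 h2
      exact (Finset.mem_sdiff.mp h2).2 h1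
    have hset : ((A ∩ B) ∪ R₁) ∩ ((A ∩ B) ∪ R₂) = A ∩ B := by
      ext g
      have hR1 : g ∈ R₁ → g ∉ B := fun h =>
        (Finset.mem_sdiff.mp (hRA (Finset.filter_subset _ _ h))).2
      have h12 := hRdisj g
      simp only [Finset.mem_union, Finset.mem_inter]
      constructor
      · rintro ⟨h | h, h' | h'⟩
        · exact h
        · exact h
        · exact h'
        · exact absurd h' (fun hh => h12 h hh)
      · intro h; exact ⟨Or.inl h, Or.inl h⟩
    have hsetB : (B \ A) ∪ (A ∩ B) = B := by
      ext g
      simp only [Finset.mem_union, Finset.mem_sdiff, Finset.mem_inter]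
      tauto
    rw [hset]
    refine ⟨?_, ?_, ?_, ?_, ?_, ?_⟩
    · exact fun h => (mem_Eef.mp (hA (Finset.mem_inter.mp h).1)).1 rfl
    · exact fun h => (mem_Eef.mp (hA (Finset.mem_inter.mp h).1)).2 rfl
    · rw [Finset.disjoint_left]
      intro g hg hgβ
      exact hβnB g hgβ (Finset.mem_inter.mp hg).2
    · rw [Finset.disjoint_left]
      intro g hg hgγ
      exact (Finset.mem_sdiff.mp hgγ).2 (Finset.mem_inter.mp hg).1
    · rw [hsetB]; exact hpar
    · intro g hg; rw [hsetB]; exact hβsm g hg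
  · -- the exponent vectors agree
    funext g
    have hABR : g ∈ A ∩ B → g ∉ R := fun h hR' =>
      (Finset.mem_sdiff.mp (hRA hR')).2 (Finset.mem_inter.mp h).2
    simp only [Pi.add_apply, indic, Finset.mem_union]
    by_cases h1 : g ∈ A ∩ B
    · simp [h1]
    · by_cases h2 : g ∈ R
      · by_cases h3 : g ∈ R₁
        · have h4 : g ∉ R₂ := fun h => (Finset.mem_sdiff.mp h).2 h3
          simp [h1, h2, h3, h4]
        · have h4 : g ∈ R₂ := Finset.mem_sdiff.mpr ⟨h2, h3⟩
          simp [h1, h2, h3, h4]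
      · have h3 : g ∉ R₁ := fun h => h2 (Finset.filter_subset _ _ h)
        have h4 : g ∉ R₂ := fun h => h2 (Finset.sdiff_subset h)
        simp [h1, h2, h3, h4]

end StarAux
section CombMain

open SimpleGraph

variable {V : Type*} {E : Type*} [Fintype V] [Fintype E] [DecidableEq E]

lemma mem_Bfin {ends : E → Sym2 V} {e f : E} {β γ : Finset E} {d : E → ℕ} :
    d ∈ Bfin ends e f β γ ↔ ∃ α α' : Finset E,
      Compatible ends e f β γ α ∧ Compatible ends e f β γ α' ∧
      Compatible ends e f β γ (α ∩ α') ∧ indic α + indic α' = d := by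
  classical
  unfold Bfin
  simp only [Finset.mem_image, Finset.mem_filter, Finset.mem_univ, true_and, Prod.exists]
  constructor
  · rintro ⟨a, b, ⟨h1, h2, h3⟩, h4⟩
    exact ⟨a, b, h1, h2, h3, h4⟩
  · rintro ⟨a, b, h1, h2, h3, h4⟩
    exact ⟨a, b, ⟨h1, h2, h3⟩, h4⟩

lemma xF_union {A B : Finset E} (h : Disjoint A B) : xF (A ∪ B) = xF A * xF B :=
  Finset.prod_union h

lemma xF_union_inter (α α' : Finset E) :
    xF (α ∪ α') * xF (α ∩ α') = xF α * xF α' :=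
  Finset.prod_union_inter

lemma indic_inter_add_union (α α' : Finset E) :
    indic (α ∩ α') + indic (α ∪ α') = indic α + indic α' := by
  funext g
  simp only [Pi.add_apply, indic, Finset.mem_inter, Finset.mem_union]
  by_cases h1 : g ∈ α <;> by_cases h2 : g ∈ α' <;> simp [h1, h2]

lemma setlem_sdiff {E : Type*} [DecidableEq E] {β γ α α' : Finset E}
    (hαβ : Disjoint α β) (hα'β : Disjoint α' β) (hβγ : Disjoint β γ)
    (hαγ : Disjoint α γ) (hα'γ : Disjoint α' γ) :
    (β ∪ (α ∪ α')) \ (γ ∪ (α ∩ α')) = β ∪ ((α ∪ α') \ (α ∩ α')) := by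
  ext g
  have h1 : g ∈ α → g ∉ β := fun h h' => Finset.disjoint_left.mp hαβ h h'
  have h2 : g ∈ α' → g ∉ β := fun h h' => Finset.disjoint_left.mp hα'β h h'
  have h3 : g ∈ β → g ∉ γ := fun h h' => Finset.disjoint_left.mp hβγ h h'
  have h4 : g ∈ α → g ∉ γ := fun h h' => Finset.disjoint_left.mp hαγ h h'
  have h5 : g ∈ α' → g ∉ γ := fun h h' => Finset.disjoint_left.mp hα'γ h h'
  simp only [Finset.mem_sdiff, Finset.mem_union, Finset.mem_inter]
  tauto

lemma setlem_gamma {E : Type*} [DecidableEq E] {β γ α α' : Finset E}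
    (hβγ : Disjoint β γ) (hαγ : Disjoint α γ) (hα'γ : Disjoint α' γ) :
    (γ ∪ (α ∩ α')) \ (β ∪ (α ∪ α')) = γ := by
  ext g
  have h3 : g ∈ β → g ∉ γ := fun h h' => Finset.disjoint_left.mp hβγ h h'
  have h4 : g ∈ α → g ∉ γ := fun h h' => Finset.disjoint_left.mp hαγ h h'
  have h5 : g ∈ α' → g ∉ γ := fun h h' => Finset.disjoint_left.mp hα'γ h h'
  simp only [Finset.mem_sdiff, Finset.mem_union, Finset.mem_inter]
  tauto

lemma setlem_inter {E : Type*} [DecidableEq E] {β γ α α' : Finset E}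
    (hαβ : Disjoint α β) (hα'β : Disjoint α' β) (hβγ : Disjoint β γ)
    (hαγ : Disjoint α γ) (hα'γ : Disjoint α' γ) :
    (β ∪ (α ∪ α')) ∩ (γ ∪ (α ∩ α')) = α ∩ α' := by
  ext g
  have h1 : g ∈ α → g ∉ β := fun h h' => Finset.disjoint_left.mp hαβ h h'
  have h2 : g ∈ α' → g ∉ β := fun h h' => Finset.disjoint_left.mp hα'β h h'
  have h3 : g ∈ β → g ∉ γ := fun h h' => Finset.disjoint_left.mp hβγ h h'
  have h4 : g ∈ α → g ∉ γ := fun h h' => Finset.disjoint_left.mp hαγ h h'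
  have h5 : g ∈ α' → g ∉ γ := fun h h' => Finset.disjoint_left.mp hα'γ h h'
  simp only [Finset.mem_inter, Finset.mem_union]
  tauto

lemma setlem_cup {E : Type*} [DecidableEq E] (α α' : Finset E) :
    (α ∩ α') ∪ ((α ∪ α') \ (α ∩ α')) = α ∪ α' := by
  ext g
  simp only [Finset.mem_union, Finset.mem_sdiff, Finset.mem_inter]
  tauto

set_option maxHeartbeats 2000000 in
open Classical in
lemma comb_main (ends : E → Sym2 V) (e f : E) :
    ∑ A ∈ (Eef e f).powerset, ∑ B ∈ (Eef e f).powerset,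
      xF A * xF B * (if IsParacel ends e f B then 1 else 0) = Ssum ends e f := by
  classical
  -- left-hand side as a sum over a filtered product
  have hlhs : ∑ A ∈ (Eef e f).powerset, ∑ B ∈ (Eef e f).powerset,
      xF A * xF B * (if IsParacel ends e f B then 1 else 0) =
      ∑ p ∈ ((Eef e f).powerset ×ˢ (Eef e f).powerset).filter
          (fun p => IsParacel ends e f p.2), xF p.1 * xF p.2 := by
    rw [Finset.sum_filter, Finset.sum_product]
    exact Finset.sum_congr rfl fun A _ => Finset.sum_congr rfl fun B _ => by
      by_cases h : IsParacel ends e f B <;> simp [h]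
  rw [hlhs]
  -- right-hand side as a sum over a sigma set
  unfold Ssum
  have hrhs : ∀ p : Finset E × Finset E,
      xF p.1 * xF p.2 * ∑ d ∈ Bfin ends e f p.1 p.2, xPow d =
      ∑ d ∈ Bfin ends e f p.1 p.2, xF p.1 * xF p.2 * xPow d := by
    intro p; rw [Finset.mul_sum]
  rw [Finset.sum_congr rfl fun p _ => hrhs p, Finset.sum_sigma']
  symm
  refine Finset.sum_nbij'
    (fun x => (x.1.1 ∪ Finset.univ.filter (fun g => x.2 g ≠ 0),
               x.1.2 ∪ Finset.univ.filter (fun g => x.2 g = 2)))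
    (fun p => ⟨((p.1 \ p.2).filter (IsSmoot ends e f p.2), p.2 \ p.1),
      indic (p.1 ∩ p.2) +
        indic ((p.1 ∩ p.2) ∪ ((p.1 \ p.2).filter (fun g => ¬ IsSmoot ends e f p.2 g)))⟩)
    ?_ ?_ ?_ ?_ ?_
  · -- i maps into the filtered product
    rintro ⟨⟨β, γ⟩, d⟩ hx
    rw [Finset.mem_sigma] at hx
    obtain ⟨hxP, hxB⟩ := hx
    rw [Finset.mem_filter] at hxP
    obtain ⟨-, hβE, hγE, hβγ⟩ := hxP
    obtain ⟨α, α', c1, c2, c3, hd⟩ := mem_Bfin.mp hxB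
    subst hd
    obtain ⟨he1, hf1, hαβ, hαγ, hpar1, hsm1⟩ := c1
    obtain ⟨he2, hf2, hα'β, hα'γ, hpar2, hsm2⟩ := c2
    obtain ⟨he3, hf3, hββ, hγγ, hpar3, hsm3⟩ := c3
    simp only [indic_filter_ne, indic_filter_two]
    rw [Finset.mem_filter, Finset.mem_product]
    refine ⟨⟨?_, ?_⟩, hpar3⟩
    · rw [Finset.mem_powerset]
      exact Finset.union_subset hβE (Finset.union_subset
        (subset_Eef_iff.mpr ⟨he1, hf1⟩) (subset_Eef_iff.mpr ⟨he2, hf2⟩))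
    · rw [Finset.mem_powerset]
      exact Finset.union_subset hγE
        ((Finset.inter_subset_left).trans (subset_Eef_iff.mpr ⟨he1, hf1⟩))
  · -- j maps into the sigma set
    rintro ⟨A, B⟩ hy
    rw [Finset.mem_filter, Finset.mem_product] at hy
    obtain ⟨⟨hA, hB⟩, hpar⟩ := hy
    rw [Finset.mem_powerset] at hA hB
    rw [Finset.mem_sigma]
    constructor
    · rw [Finset.mem_filter]
      refine ⟨Finset.mem_univ _, ?_, ?_, ?_⟩
      · exact ((Finset.filter_subset _ _).trans Finset.sdiff_subset).trans hA
      · exact Finset.sdiff_subset.trans hB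
      · rw [Finset.disjoint_left]
        intro g hg hg'
        exact (Finset.mem_sdiff.mp hg').2
          (Finset.mem_sdiff.mp (Finset.filter_subset _ _ hg)).1
    · obtain ⟨α, α', c1, c2, c3, hd⟩ := star_twins ends e f hA hB hpar
      exact mem_Bfin.mpr ⟨α, α', c1, c2, c3, hd⟩
  · -- left inverse : j (i x) = x
    rintro ⟨⟨β, γ⟩, d⟩ hx
    rw [Finset.mem_sigma] at hx
    obtain ⟨hxP, hxB⟩ := hx
    rw [Finset.mem_filter] at hxP
    obtain ⟨-, hβE, hγE, hβγ⟩ := hxP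
    obtain ⟨α, α', c1, c2, c3, hd⟩ := mem_Bfin.mp hxB
    subst hd
    obtain ⟨he1, hf1, hαβ, hαγ, hpar1, hsm1⟩ := c1
    obtain ⟨he2, hf2, hα'β, hα'γ, hpar2, hsm2⟩ := c2
    obtain ⟨he3, hf3, hββ, hγγ, hpar3, hsm3⟩ := c3
    simp only [indic_filter_ne, indic_filter_two]
    have hsd := setlem_sdiff hαβ hα'β hβγ hαγ hα'γ
    have hγ' := setlem_gamma hβγ hαγ hα'γ
    have hAB' := setlem_inter hαβ hα'β hβγ hαγ hα'γ
    have hsmβ : ∀ g ∈ β, IsSmoot ends e f (γ ∪ (α ∩ α')) g := hsm3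
    have hnsmΔ : ∀ g ∈ (α ∪ α') \ (α ∩ α'),
        ¬ IsSmoot ends e f (γ ∪ (α ∩ α')) g := by
      intro g hg hsm
      obtain ⟨hgu, hgni⟩ := Finset.mem_sdiff.mp hg
      rcases Finset.mem_union.mp hgu with h | h
      · refine not_smoot_of_mem_paracel (P := γ ∪ α) ?_
          (Finset.mem_union_right _ h) hpar1 hsm
        exact Finset.union_subset_union_right Finset.inter_subset_left
      · refine not_smoot_of_mem_paracel (P := γ ∪ α') ?_
          (Finset.mem_union_right _ h) hpar2 hsm
        exact Finset.union_subset_union_right Finset.inter_subset_right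
    have hβ' : ((β ∪ (α ∪ α')) \ (γ ∪ (α ∩ α'))).filter
        (IsSmoot ends e f (γ ∪ (α ∩ α'))) = β := by
      rw [hsd, Finset.filter_union, Finset.filter_true_of_mem hsmβ,
        Finset.filter_false_of_mem hnsmΔ, Finset.union_empty]
    have hR' : ((β ∪ (α ∪ α')) \ (γ ∪ (α ∩ α'))).filter
        (fun g => ¬ IsSmoot ends e f (γ ∪ (α ∩ α')) g) = (α ∪ α') \ (α ∩ α') := by
      rw [hsd, Finset.filter_union,
        Finset.filter_false_of_mem (fun g hg h => h (hsmβ g hg)),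
        Finset.filter_true_of_mem hnsmΔ, Finset.empty_union]
    rw [hβ', hγ', hR', hAB', setlem_cup, indic_inter_add_union]
  · -- right inverse : i (j y) = y
    rintro ⟨A, B⟩ hy
    rw [Finset.mem_filter, Finset.mem_product] at hy
    obtain ⟨⟨hA, hB⟩, hpar⟩ := hy
    rw [Finset.mem_powerset] at hA hB
    dsimp only
    set β := (A \ B).filter (IsSmoot ends e f B) with hβdef
    set R := (A \ B).filter (fun g => ¬ IsSmoot ends e f B g) with hRdef
    have h1 : Finset.univ.filter
        (fun g => (indic (A ∩ B) + indic ((A ∩ B) ∪ R)) g ≠ 0) = (A ∩ B) ∪ R := by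
      rw [indic_filter_ne]
      ext g
      simp only [Finset.mem_union, Finset.mem_inter]
      tauto
    have h2 : Finset.univ.filter
        (fun g => (indic (A ∩ B) + indic ((A ∩ B) ∪ R)) g = 2) = A ∩ B := by
      rw [indic_filter_two]
      ext g
      simp only [Finset.mem_inter, Finset.mem_union]
      tauto
    rw [h1, h2]
    have hfst : β ∪ ((A ∩ B) ∪ R) = A := by
      ext g
      have hem := Classical.em (IsSmoot ends e f B g)
      simp only [hβdef, hRdef, Finset.mem_union, Finset.mem_filter, Finset.mem_sdiff,
        Finset.mem_inter]
      tauto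
    have hsnd : (B \ A) ∪ (A ∩ B) = B := by
      ext g
      simp only [Finset.mem_union, Finset.mem_sdiff, Finset.mem_inter]
      tauto
    rw [hfst, hsnd]
  · -- values agree
    rintro ⟨⟨β, γ⟩, d⟩ hx
    rw [Finset.mem_sigma] at hx
    obtain ⟨hxP, hxB⟩ := hx
    rw [Finset.mem_filter] at hxP
    obtain ⟨-, hβE, hγE, hβγ⟩ := hxP
    obtain ⟨α, α', c1, c2, c3, hd⟩ := mem_Bfin.mp hxB
    subst hd
    obtain ⟨he1, hf1, hαβ, hαγ, hpar1, hsm1⟩ := c1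
    obtain ⟨he2, hf2, hα'β, hα'γ, hpar2, hsm2⟩ := c2
    simp only [indic_filter_ne, indic_filter_two]
    rw [xPow_add, xPow_indic, xPow_indic]
    have hd1 : Disjoint β (α ∪ α') :=
      Finset.disjoint_union_right.mpr ⟨hαβ.symm, hα'β.symm⟩
    have hd2 : Disjoint γ (α ∩ α') := by
      rw [Finset.disjoint_left]
      intro g hg hg'
      exact Finset.disjoint_left.mp hαγ (Finset.mem_inter.mp hg').1 hg
    rw [xF_union hd1, xF_union hd2]
    have h := xF_union_inter (E := E) α α'
    linear_combination (-(xF β * xF γ)) * h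
end CombMain
set_option maxHeartbeats 1000000 in
theorem stmt0' {V E : Type*} [Fintype V] [Fintype E] [DecidableEq E]
    (ends : E → Sym2 V) (e f : E) (hef : e ≠ f) :
    ∃ N : Polynomial (MvPolynomial E ℤ),
      Dpoly ends e f =
        Polynomial.C (MvPolynomial.X e) * Polynomial.C (MvPolynomial.X f) *
          (1 - Polynomial.X) * N ∧
      Polynomial.eval 1 N = Ssum ends e f := by
  classical
  set G : ℕ → Polynomial (MvPolynomial E ℤ) :=
    fun n => ∑ i ∈ Finset.range n, Polynomial.X ^ i with hG
  refine ⟨∑ A ∈ (Eef e f).powerset, ∑ B ∈ (Eef e f).powerset,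
    Polynomial.C (xF A) * Polynomial.C (xF B) *
      (G (kComp ends (insert f (insert e A)) + kComp ends B)
        - G (kComp ends (insert e A) + kComp ends (insert f B))), ?_, ?_⟩
  · -- the factorization identity
    have hffe : Tab ends {f} {e} = Polynomial.C (MvPolynomial.X f) *
        ∑ B ∈ (Eef e f).powerset,
          Polynomial.C (xF B) * Polynomial.X ^ kComp ends (insert f B) := by
      rw [Tab_single ends hef.symm, Eef_comm]
    rw [Dpoly, Tab_single ends hef, Tab_pair ends hef, Tab_empty ends, hffe]
    have key : ∀ (c1 c2 : MvPolynomial E ℤ) (F1 F2 : Finset E → ℕ),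
        (Polynomial.C c1 * ∑ A ∈ (Eef e f).powerset,
            Polynomial.C (xF A) * Polynomial.X ^ F1 A) *
        (Polynomial.C c2 * ∑ B ∈ (Eef e f).powerset,
            Polynomial.C (xF B) * Polynomial.X ^ F2 B) =
        ∑ A ∈ (Eef e f).powerset, ∑ B ∈ (Eef e f).powerset,
          Polynomial.C c1 * Polynomial.C c2 *
            (Polynomial.C (xF A) * Polynomial.C (xF B)) *
              Polynomial.X ^ (F1 A + F2 B) := by
      intro c1 c2 F1 F2
      rw [mul_mul_mul_comm, Finset.sum_mul_sum, Finset.mul_sum]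
      refine Finset.sum_congr rfl fun A _ => ?_
      rw [Finset.mul_sum]
      refine Finset.sum_congr rfl fun B _ => ?_
      rw [pow_add]; ring
    have key2 : ∀ (c1 : MvPolynomial E ℤ) (F1 F2 : Finset E → ℕ),
        (Polynomial.C c1 * ∑ A ∈ (Eef e f).powerset,
            Polynomial.C (xF A) * Polynomial.X ^ F1 A) *
        (∑ B ∈ (Eef e f).powerset,
            Polynomial.C (xF B) * Polynomial.X ^ F2 B) =
        ∑ A ∈ (Eef e f).powerset, ∑ B ∈ (Eef e f).powerset,
          Polynomial.C c1 * (Polynomial.C (xF A) * Polynomial.C (xF B)) *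
              Polynomial.X ^ (F1 A + F2 B) := by
      intro c1 F1 F2
      have := key c1 1 F1 F2
      rw [map_one, one_mul] at this
      rw [this]
      exact Finset.sum_congr rfl fun A _ => Finset.sum_congr rfl fun B _ => by ring
    rw [key (MvPolynomial.X e) (MvPolynomial.X f)
      (fun A => kComp ends (insert e A)) (fun B => kComp ends (insert f B)),
      key2 (MvPolynomial.X e * MvPolynomial.X f)
      (fun A => kComp ends (insert f (insert e A))) (fun B => kComp ends B),
      ← Finset.sum_sub_distrib]
    rw [Finset.mul_sum]
    refine Finset.sum_congr rfl fun A _ => ?_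
    rw [← Finset.sum_sub_distrib, Finset.mul_sum]
    refine Finset.sum_congr rfl fun B _ => ?_
    simp only [map_mul, hG]
    have g1 := geom_sum_mul (Polynomial.X : Polynomial (MvPolynomial E ℤ))
      (kComp ends (insert e A) + kComp ends (insert f B))
    have g2 := geom_sum_mul (Polynomial.X : Polynomial (MvPolynomial E ℤ))
      (kComp ends (insert f (insert e A)) + kComp ends B)
    linear_combination (Polynomial.C (MvPolynomial.X e) * Polynomial.C (MvPolynomial.X f) *
        Polynomial.C (xF A) * Polynomial.C (xF B)) * g2 -
      (Polynomial.C (MvPolynomial.X e) * Polynomial.C (MvPolynomial.X f) *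
        Polynomial.C (xF A) * Polynomial.C (xF B)) * g1
  · -- evaluation at q = 1
    have hGeval : ∀ n : ℕ, Polynomial.eval (1 : MvPolynomial E ℤ) (G n) =
        (n : MvPolynomial E ℤ) := by
      intro n
      rw [hG]
      simp [Polynomial.eval_finset_sum]
    rw [Polynomial.eval_finset_sum]
    have hstep : ∀ A ∈ (Eef e f).powerset,
        Polynomial.eval (1 : MvPolynomial E ℤ)
          (∑ B ∈ (Eef e f).powerset, Polynomial.C (xF A) * Polynomial.C (xF B) *
            (G (kComp ends (insert f (insert e A)) + kComp ends B)
              - G (kComp ends (insert e A) + kComp ends (insert f B)))) =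
        ∑ B ∈ (Eef e f).powerset, xF A * xF B *
          (((kComp ends (insert f (insert e A)) : MvPolynomial E ℤ) + kComp ends B)
            - ((kComp ends (insert e A) : MvPolynomial E ℤ) + kComp ends (insert f B))) := by
      intro A _
      rw [Polynomial.eval_finset_sum]
      refine Finset.sum_congr rfl fun B _ => ?_
      rw [Polynomial.eval_mul, Polynomial.eval_mul, Polynomial.eval_sub,
        Polynomial.eval_C, Polynomial.eval_C, hGeval, hGeval]
      push_cast
      ring
    rw [Finset.sum_congr rfl hstep]
    -- symmetrization
    have hsplit : ∑ A ∈ (Eef e f).powerset, ∑ B ∈ (Eef e f).powerset,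
        xF A * xF B *
          (((kComp ends (insert f (insert e A)) : MvPolynomial E ℤ) + kComp ends B)
            - ((kComp ends (insert e A) : MvPolynomial E ℤ) + kComp ends (insert f B))) =
        (∑ A ∈ (Eef e f).powerset, xF A *
            ((kComp ends (insert f (insert e A)) : MvPolynomial E ℤ)
              - kComp ends (insert e A))) *
          (∑ B ∈ (Eef e f).powerset, xF B) +
        (∑ A ∈ (Eef e f).powerset, xF A) *
          (∑ B ∈ (Eef e f).powerset, xF B *
            ((kComp ends B : MvPolynomial E ℤ) - kComp ends (insert f B))) := by
      rw [Finset.sum_mul_sum, Finset.sum_mul_sum, ← Finset.sum_add_distrib]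
      refine Finset.sum_congr rfl fun A _ => ?_
      rw [← Finset.sum_add_distrib]
      refine Finset.sum_congr rfl fun B _ => ?_
      ring
    rw [hsplit]
    have hswap : (∑ A ∈ (Eef e f).powerset, xF A *
            ((kComp ends (insert f (insert e A)) : MvPolynomial E ℤ)
              - kComp ends (insert e A))) *
          (∑ B ∈ (Eef e f).powerset, xF B) =
        (∑ A ∈ (Eef e f).powerset, xF A) *
          (∑ B ∈ (Eef e f).powerset, xF B *
            ((kComp ends (insert f (insert e B)) : MvPolynomial E ℤ)
              - kComp ends (insert e B))) := by
      rw [mul_comm]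
    rw [hswap, ← mul_add, ← Finset.sum_add_distrib]
    have hkey : ∀ B ∈ (Eef e f).powerset,
        xF B * ((kComp ends (insert f (insert e B)) : MvPolynomial E ℤ)
              - kComp ends (insert e B)) +
        xF B * ((kComp ends B : MvPolynomial E ℤ) - kComp ends (insert f B)) =
        xF B * (if IsParacel ends e f B then 1 else 0) := by
      intro B hB
      obtain ⟨heB, hfB⟩ := subset_Eef_iff.mp (Finset.mem_powerset.mp hB)
      have h := key_count ends e f hef heB hfB
      have h2 : ((kComp ends (insert f (insert e B)) : MvPolynomial E ℤ) :
          MvPolynomial E ℤ) + kComp ends B - kComp ends (insert e B)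
            - kComp ends (insert f B) =
          if IsParacel ends e f B then 1 else 0 := by
        by_cases hp : IsParacel ends e f B
        · rw [if_pos hp] at h ⊢; exact_mod_cast h
        · rw [if_neg hp] at h ⊢; exact_mod_cast h
      linear_combination xF B * h2
    rw [Finset.sum_congr rfl hkey, Finset.sum_mul_sum]
    rw [← comb_main ends e f]
    refine Finset.sum_congr rfl fun A _ => Finset.sum_congr rfl fun B _ => by ring

/-- There exists `N ∈ R` with `D = x_e x_f (1−q) N` and `N|_{q=1} = S`. -/
theorem stmt0 {V E : Type*} [Fintype V] [Fintype E] [DecidableEq E]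
    (ends : E → Sym2 V) (e f : E) (hef : e ≠ f) :
    ∃ N : Polynomial (MvPolynomial E ℤ),
      Dpoly ends e f =
        Polynomial.C (MvPolynomial.X e) * Polynomial.C (MvPolynomial.X f) *
          (1 - Polynomial.X) * N ∧
      Polynomial.eval 1 N = Ssum ends e f :=
  stmt0' ends e f hef
end

section
/- The element x_e · x_f · (1 − q) divides D in the ring R. -/
open Finset

section ProofAux

lemma one_sub_X_dvd_pow_sub_pow {R : Type*} [CommRing R] (a b : ℕ) :
    (1 - Polynomial.X : Polynomial R) ∣ Polynomial.X ^ a - Polynomial.X ^ b := by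
  have h : ∀ n : ℕ, (1 - Polynomial.X : Polynomial R) ∣ Polynomial.X ^ n - 1 := by
    intro n
    rw [show (1 - Polynomial.X : Polynomial R) = -(Polynomial.X - 1) by ring, neg_dvd]
    simpa using sub_dvd_pow_sub_pow (Polynomial.X : Polynomial R) 1 n
  simpa using dvd_sub (h a) (h b)

variable {E : Type*} [Fintype E] [DecidableEq E]

lemma reindex_one {M : Type*} [AddCommMonoid M] (e f : E) (hef : e ≠ f)
    (g : Finset E → M) :
    ∑ F ∈ Finset.univ.filter (fun F : Finset E => {e} ⊆ F ∧ F ∩ {f} = ∅), g F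
      = ∑ A ∈ Finset.univ.filter (fun A : Finset E => e ∉ A ∧ f ∉ A), g (insert e A) := by
  refine Finset.sum_nbij' (fun F => F.erase e) (fun A => insert e A) ?_ ?_ ?_ ?_ ?_
  · intro F hF
    simp only [Finset.mem_filter, Finset.singleton_subset_iff, Finset.mem_univ, true_and,
      Finset.eq_empty_iff_forall_notMem, Finset.mem_inter, Finset.mem_singleton] at hF ⊢
    exact ⟨Finset.notMem_erase _ _, fun h => hF.2 f ⟨Finset.mem_of_mem_erase h, rfl⟩⟩
  · intro A hA
    simp only [Finset.mem_filter, Finset.singleton_subset_iff, Finset.mem_univ, true_and,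
      Finset.eq_empty_iff_forall_notMem, Finset.mem_inter, Finset.mem_singleton,
      Finset.mem_insert] at hA ⊢
    refine ⟨by simp, ?_⟩
    rintro x ⟨hx1 | hx2, rfl⟩
    · exact hef hx1.symm
    · exact hA.2 hx2
  · intro F hF
    simp only [Finset.mem_filter, Finset.singleton_subset_iff] at hF
    exact Finset.insert_erase hF.2.1
  · intro A hA
    simp only [Finset.mem_filter] at hA
    exact Finset.erase_insert hA.2.1
  · intro F hF
    simp only [Finset.mem_filter, Finset.singleton_subset_iff] at hF
    rw [Finset.insert_erase hF.2.1]

lemma reindex_two {M : Type*} [AddCommMonoid M] (e f : E) (hef : e ≠ f)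
    (g : Finset E → M) :
    ∑ F ∈ Finset.univ.filter (fun F : Finset E => {e, f} ⊆ F ∧ F ∩ ∅ = ∅), g F
      = ∑ A ∈ Finset.univ.filter (fun A : Finset E => e ∉ A ∧ f ∉ A),
          g (insert f (insert e A)) := by
  refine Finset.sum_nbij' (fun F => (F.erase f).erase e) (fun A => insert f (insert e A))
    ?_ ?_ ?_ ?_ ?_
  · intro F hF
    simp only [Finset.mem_filter, Finset.insert_subset_iff, Finset.singleton_subset_iff,
      Finset.mem_univ, true_and] at hF ⊢
    exact ⟨Finset.notMem_erase _ _,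
      fun h => Finset.notMem_erase f F (Finset.mem_of_mem_erase h)⟩
  · intro A hA
    simp only [Finset.mem_filter, Finset.insert_subset_iff, Finset.singleton_subset_iff,
      Finset.mem_univ, true_and, Finset.inter_empty, and_true, Finset.mem_insert] at hA ⊢
    simp
  · intro F hF
    simp only [Finset.mem_filter, Finset.insert_subset_iff, Finset.singleton_subset_iff] at hF
    show insert f (insert e ((F.erase f).erase e)) = F
    rw [Finset.insert_erase (Finset.mem_erase.mpr ⟨hef, hF.2.1.1⟩),
      Finset.insert_erase hF.2.1.2]
  · intro A hA
    simp only [Finset.mem_filter] at hA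
    show ((insert f (insert e A)).erase f).erase e = A
    rw [Finset.erase_insert, Finset.erase_insert hA.2.1]
    simp only [Finset.mem_insert, not_or]
    exact ⟨hef.symm, hA.2.2⟩
  · intro F hF
    simp only [Finset.mem_filter, Finset.insert_subset_iff, Finset.singleton_subset_iff] at hF
    show g F = g (insert f (insert e ((F.erase f).erase e)))
    rw [Finset.insert_erase (Finset.mem_erase.mpr ⟨hef, hF.2.1.1⟩),
      Finset.insert_erase hF.2.1.2]

lemma reindex_zero {M : Type*} [AddCommMonoid M] (e f : E)
    (g : Finset E → M) :
    ∑ F ∈ Finset.univ.filter (fun F : Finset E => (∅ : Finset E) ⊆ F ∧ F ∩ {e, f} = ∅), g F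
      = ∑ A ∈ Finset.univ.filter (fun A : Finset E => e ∉ A ∧ f ∉ A), g A := by
  apply Finset.sum_congr _ (fun _ _ => rfl)
  ext F
  simp only [Finset.mem_filter, Finset.mem_univ, true_and, Finset.empty_subset,
    Finset.eq_empty_iff_forall_notMem, Finset.mem_inter, Finset.mem_insert,
    Finset.mem_singleton]
  constructor
  · intro h
    exact ⟨fun he => h e ⟨he, Or.inl rfl⟩, fun hf => h f ⟨hf, Or.inr rfl⟩⟩
  · rintro ⟨h1, h2⟩ x ⟨hx, rfl | rfl⟩
    exacts [h1 hx, h2 hx]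

end ProofAux

/-- `x_e · x_f · (1 − q)` divides `D` in `R`. -/
theorem stmt1 {V E : Type*} [Fintype V] [Fintype E] [DecidableEq E]
    (ends : E → Sym2 V) (e f : E) (hef : e ≠ f) :
    Polynomial.C (MvPolynomial.X e) * Polynomial.C (MvPolynomial.X f) *
        (1 - Polynomial.X) ∣ Dpoly ends e f := by
  classical
  have h1 : Tab ends {e} {f} =
      ∑ A ∈ Finset.univ.filter (fun A : Finset E => e ∉ A ∧ f ∉ A),
        Polynomial.C (xF (insert e A)) * Polynomial.X ^ kComp ends (insert e A) :=
    reindex_one e f hef _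
  have h2 : Tab ends {f} {e} =
      ∑ A ∈ Finset.univ.filter (fun A : Finset E => f ∉ A ∧ e ∉ A),
        Polynomial.C (xF (insert f A)) * Polynomial.X ^ kComp ends (insert f A) :=
    reindex_one f e hef.symm _
  have h3 : Tab ends {e, f} ∅ =
      ∑ A ∈ Finset.univ.filter (fun A : Finset E => e ∉ A ∧ f ∉ A),
        Polynomial.C (xF (insert f (insert e A))) *
          Polynomial.X ^ kComp ends (insert f (insert e A)) :=
    reindex_two e f hef _
  have h4 : Tab ends ∅ {e, f} =
      ∑ A ∈ Finset.univ.filter (fun A : Finset E => e ∉ A ∧ f ∉ A),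
        Polynomial.C (xF A) * Polynomial.X ^ kComp ends A :=
    reindex_zero e f _
  have hset : Finset.univ.filter (fun A : Finset E => f ∉ A ∧ e ∉ A)
      = Finset.univ.filter (fun A : Finset E => e ∉ A ∧ f ∉ A) := by
    ext A; simp [and_comm]
  rw [hset] at h2
  rw [Dpoly, h1, h2, h3, h4, Finset.sum_mul_sum, Finset.sum_mul_sum,
    ← Finset.sum_sub_distrib]
  refine Finset.dvd_sum fun A hA => ?_
  rw [← Finset.sum_sub_distrib]
  refine Finset.dvd_sum fun B hB => ?_
  simp only [Finset.mem_filter, Finset.mem_univ, true_and] at hA hB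
  obtain ⟨w, hw⟩ := one_sub_X_dvd_pow_sub_pow (R := MvPolynomial E ℤ)
    (kComp ends (insert e A) + kComp ends (insert f B))
    (kComp ends (insert f (insert e A)) + kComp ends B)
  refine ⟨Polynomial.C (xF A * xF B) * w, ?_⟩
  have hxA : xF (insert e A) = MvPolynomial.X e * xF A := by
    simp [xF, Finset.prod_insert hA.1]
  have hxB : xF (insert f B) = MvPolynomial.X f * xF B := by
    simp [xF, Finset.prod_insert hB.2]
  have hfA : f ∉ insert e A := by simp [Finset.mem_insert, hef.symm, hA.2]
  have hxAB : xF (insert f (insert e A)) =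
      MvPolynomial.X f * (MvPolynomial.X e * xF A) := by
    rw [show xF (insert f (insert e A)) = MvPolynomial.X f * xF (insert e A) by
      simp [xF, Finset.prod_insert hfA], hxA]
  rw [hxA, hxB, hxAB]
  have expand :
      Polynomial.C (MvPolynomial.X e * xF A) * Polynomial.X ^ kComp ends (insert e A) *
          (Polynomial.C (MvPolynomial.X f * xF B) * Polynomial.X ^ kComp ends (insert f B)) -
        Polynomial.C (MvPolynomial.X f * (MvPolynomial.X e * xF A)) *
            Polynomial.X ^ kComp ends (insert f (insert e A)) *
          (Polynomial.C (xF B) * Polynomial.X ^ kComp ends B) =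
      Polynomial.C (MvPolynomial.X e) * Polynomial.C (MvPolynomial.X f) *
        Polynomial.C (xF A * xF B) *
        (Polynomial.X ^ (kComp ends (insert e A) + kComp ends (insert f B)) -
          Polynomial.X ^ (kComp ends (insert f (insert e A)) + kComp ends B)) := by
    simp only [map_mul, pow_add]; ring
  rw [expand, hw]; ring
end

section
/- If the edge e is a loop (i.e. ends(e) = s(v,v) for some vertex v), then D = 0 in R. -/
open Finset

section Aux

variable {V E : Type*}

lemma etaGraph_insert_loop (ends : E → Sym2 V) {e : E} [DecidableEq E]
    (hloop : ∃ v : V, ends e = s(v, v)) (F : Finset E) :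
    etaGraph ends (insert e F) = etaGraph ends F := by
  obtain ⟨v, hv⟩ := hloop
  ext a b
  constructor
  · rintro ⟨hab, g, hg, hends⟩
    rcases Finset.mem_insert.mp hg with rfl | hg
    · rw [hv] at hends
      rw [Sym2.eq_iff] at hends
      rcases hends with ⟨h1, h2⟩ | ⟨h1, h2⟩
      · exact absurd (h1.symm.trans h2) hab
      · exact absurd (h2.symm.trans h1) hab
    · exact ⟨hab, g, hg, hends⟩
  · rintro ⟨hab, g, hg, hends⟩
    exact ⟨hab, g, Finset.mem_insert_of_mem hg, hends⟩

lemma kComp_insert_loop (ends : E → Sym2 V) {e : E} [DecidableEq E]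
    (hloop : ∃ v : V, ends e = s(v, v)) (F : Finset E) :
    kComp ends (insert e F) = kComp ends F := by
  unfold kComp
  rw [etaGraph_insert_loop ends hloop F]

lemma tab_loop {V E : Type*} [Fintype V] [Fintype E] [DecidableEq E]
    (ends : E → Sym2 V) {e : E} (hloop : ∃ v : V, ends e = s(v, v))
    (A B : Finset E) (heA : e ∉ A) (heB : e ∉ B) :
    Tab ends (insert e A) B = Polynomial.C (MvPolynomial.X e) * Tab ends A (insert e B) := by
  classical
  unfold Tab
  rw [Finset.mul_sum]
  refine Finset.sum_nbij' (fun F => F.erase e) (fun G => insert e G) ?_ ?_ ?_ ?_ ?_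
  · intro F hF
    simp only [Finset.mem_filter, Finset.mem_univ, true_and] at hF ⊢
    have heF : e ∈ F := hF.1 (Finset.mem_insert_self e A)
    constructor
    · intro a ha
      exact Finset.mem_erase.mpr ⟨fun h => heA (h ▸ ha), hF.1 (Finset.mem_insert_of_mem ha)⟩
    · ext g
      simp only [Finset.mem_inter, Finset.mem_erase, Finset.mem_insert,
        Finset.notMem_empty, iff_false, not_and]
      rintro ⟨hge, hgF⟩ (rfl | hgB)
      · exact hge rfl
      · have : g ∈ F ∩ B := Finset.mem_inter.mpr ⟨hgF, hgB⟩
        rw [hF.2] at this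
        exact absurd this (Finset.notMem_empty g)
  · intro G hG
    simp only [Finset.mem_filter, Finset.mem_univ, true_and] at hG ⊢
    have heG : e ∉ G := fun h => by
      have : e ∈ G ∩ insert e B := Finset.mem_inter.mpr ⟨h, Finset.mem_insert_self e B⟩
      rw [hG.2] at this; exact absurd this (Finset.notMem_empty e)
    constructor
    · exact Finset.insert_subset_insert e hG.1
    · ext g
      simp only [Finset.mem_inter, Finset.mem_insert, Finset.notMem_empty, iff_false, not_and]
      rintro (rfl | hgG) hgB
      · exact heB hgB
      · have : g ∈ G ∩ insert e B :=
          Finset.mem_inter.mpr ⟨hgG, Finset.mem_insert_of_mem hgB⟩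
        rw [hG.2] at this; exact absurd this (Finset.notMem_empty g)
  · intro F hF
    simp only [Finset.mem_filter, Finset.mem_univ, true_and] at hF
    exact Finset.insert_erase (hF.1 (Finset.mem_insert_self e A))
  · intro G hG
    simp only [Finset.mem_filter, Finset.mem_univ, true_and] at hG
    have heG : e ∉ G := fun h => by
      have : e ∈ G ∩ insert e B := Finset.mem_inter.mpr ⟨h, Finset.mem_insert_self e B⟩
      rw [hG.2] at this; exact absurd this (Finset.notMem_empty e)
    exact Finset.erase_insert heG
  · intro F hF
    simp only [Finset.mem_filter, Finset.mem_univ, true_and] at hF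
    have heF : e ∈ F := hF.1 (Finset.mem_insert_self e A)
    have hx : xF F = MvPolynomial.X e * xF (F.erase e) := by
      unfold xF
      exact (Finset.mul_prod_erase F _ heF).symm
    have hk : kComp ends F = kComp ends (F.erase e) := by
      conv_lhs => rw [← Finset.insert_erase heF]
      exact kComp_insert_loop ends hloop _
    rw [hx, hk, map_mul]
    ring

end Aux
/-- if `e` is a loop then `D = 0`. -/
theorem stmt6 {V E : Type*} [Fintype V] [Fintype E] [DecidableEq E]
    (ends : E → Sym2 V) (e f : E) (hef : e ≠ f)
    (hloop : ∃ v : V, ends e = s(v, v)) :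
    Dpoly ends e f = 0 := by
  unfold Dpoly
  have h1 : Tab ends {e} {f} = Polynomial.C (MvPolynomial.X e) * Tab ends ∅ {e, f} := by
    have := tab_loop ends hloop ∅ {f} (Finset.notMem_empty e)
      (by simp [hef])
    simpa using this
  have h2 : Tab ends {e, f} ∅ = Polynomial.C (MvPolynomial.X e) * Tab ends {f} {e} := by
    have := tab_loop ends hloop {f} ∅ (by simp [hef]) (Finset.notMem_empty e)
    simpa using this
  rw [h1, h2]
  ring
end

section
/- Suppose an edge g ∈ E^{ef} is parallel to e or to f (ends(g) = ends(e) or ends(g) = ends(f)). Then for every exponent vector λ : E → ℕ with λ(g) = 2, the coefficient of the monomial x^λ in D (an element of ℤ[q]) is zero. -/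
open Finset

section Stmt8Aux

variable {V : Type*} {E : Type*}

lemma etaGraph_insert_of_mem' (ends : E → Sym2 V) {F : Finset E} {g h : E}
    [DecidableEq E] (hgF : g ∈ F) (he : ends h = ends g) :
    etaGraph ends (insert h F) = etaGraph ends F := by
  ext v w
  constructor
  · rintro ⟨hvw, g', hg', hends⟩
    rcases Finset.mem_insert.mp hg' with rfl | hg'
    · exact ⟨hvw, g, hgF, by rw [← he, hends]⟩
    · exact ⟨hvw, g', hg', hends⟩
  · rintro ⟨hvw, g', hg', hends⟩
    exact ⟨hvw, g', Finset.mem_insert_of_mem hg', hends⟩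

lemma etaGraph_erase_of_mem' (ends : E → Sym2 V) {F : Finset E} {g h : E}
    [DecidableEq E] (hgF : g ∈ F) (hgh : g ≠ h) (he : ends h = ends g) :
    etaGraph ends (F.erase h) = etaGraph ends F := by
  ext v w
  constructor
  · rintro ⟨hvw, g', hg', hends⟩
    exact ⟨hvw, g', Finset.mem_of_mem_erase hg', hends⟩
  · rintro ⟨hvw, g', hg', hends⟩
    by_cases hgf : g' = h
    · exact ⟨hvw, g, Finset.mem_erase.mpr ⟨hgh, hgF⟩, by rw [← he, ← hgf, hends]⟩
    · exact ⟨hvw, g', Finset.mem_erase.mpr ⟨hgf, hg'⟩, hends⟩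

lemma kComp_insert_of_mem (ends : E → Sym2 V) {F : Finset E} {g h : E}
    [DecidableEq E] (hgF : g ∈ F) (he : ends h = ends g) :
    kComp ends (insert h F) = kComp ends F := by
  unfold kComp; rw [etaGraph_insert_of_mem' ends hgF he]

lemma kComp_erase_of_mem (ends : E → Sym2 V) {F : Finset E} {g h : E}
    [DecidableEq E] (hgF : g ∈ F) (hgh : g ≠ h) (he : ends h = ends g) :
    kComp ends (F.erase h) = kComp ends F := by
  unfold kComp; rw [etaGraph_erase_of_mem' ends hgF hgh he]

variable [DecidableEq E]

/-- The exponent vector of the squarefree monomial `x^F`. -/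
noncomputable def chi (F : Finset E) : E →₀ ℕ := ∑ g ∈ F, Finsupp.single g 1

lemma chi_apply (F : Finset E) (a : E) : chi F a = if a ∈ F then 1 else 0 := by
  classical
  simp only [chi, Finsupp.finset_sum_apply, Finsupp.single_apply]
  rw [Finset.sum_ite_eq' F a (fun _ => 1)]

lemma chi_insert {F : Finset E} {h : E} (hh : h ∉ F) :
    chi (insert h F) = Finsupp.single h 1 + chi F := by
  simp [chi, Finset.sum_insert hh]

lemma chi_erase {F : Finset E} {h : E} (hh : h ∈ F) :
    chi F = Finsupp.single h 1 + chi (F.erase h) := by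
  simp [chi, (Finset.add_sum_erase F _ hh).symm]

/-- The ring homomorphism exchanging the roles of `q` and the `x_g`. -/
noncomputable def Phi : Polynomial (MvPolynomial E ℤ) →+* MvPolynomial E (Polynomial ℤ) :=
  Polynomial.eval₂RingHom (MvPolynomial.map (Int.castRingHom (Polynomial ℤ)))
    (MvPolynomial.C Polynomial.X)

omit [DecidableEq E] in
lemma monCoeff_eq (P : Polynomial (MvPolynomial E ℤ)) (lam : E →₀ ℕ) :
    monCoeff P lam = MvPolynomial.coeff lam (Phi P) := by
  rw [monCoeff, Phi, Polynomial.coe_eval₂RingHom, Polynomial.eval₂_eq_sum,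
    Polynomial.sum, Polynomial.sum, MvPolynomial.coeff_sum]
  refine Finset.sum_congr rfl fun n _ => ?_
  rw [← map_pow]
  conv_rhs => rw [mul_comm]
  rw [MvPolynomial.coeff_C_mul, MvPolynomial.coeff_map]
  simp [mul_comm, Polynomial.C_eq_intCast]

lemma prod_X_eq_monomial' (F : Finset E) {R : Type*} [CommSemiring R] :
    (∏ g ∈ F, MvPolynomial.X g : MvPolynomial E R) = MvPolynomial.monomial (chi F) 1 := by
  classical
  induction F using Finset.cons_induction with
  | empty => simp [chi]
  | cons a s ha ih =>
      rw [Finset.prod_cons, ih]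
      show _ = MvPolynomial.monomial (∑ g ∈ Finset.cons a s ha, Finsupp.single g 1) 1
      rw [Finset.sum_cons, MvPolynomial.X, MvPolynomial.monomial_mul, one_mul]
      rfl

lemma Phi_C_xF_mul_X_pow (F : Finset E) (k : ℕ) :
    Phi (Polynomial.C (xF F) * Polynomial.X ^ k)
      = MvPolynomial.monomial (chi F) (Polynomial.X ^ k : Polynomial ℤ) := by
  rw [map_mul, map_pow]
  have h1 : Phi (Polynomial.C (xF F)) = MvPolynomial.monomial (chi F) (1 : Polynomial ℤ) := by
    rw [Phi, Polynomial.coe_eval₂RingHom, Polynomial.eval₂_C, xF, map_prod]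
    simp [MvPolynomial.map_X, prod_X_eq_monomial']
  have h2 : Phi (Polynomial.X : Polynomial (MvPolynomial E ℤ)) = MvPolynomial.C Polynomial.X := by
    rw [Phi, Polynomial.coe_eval₂RingHom, Polynomial.eval₂_X]
  rw [h1, h2, ← map_pow, mul_comm, MvPolynomial.C_mul_monomial, mul_one]

variable {V : Type*} [Fintype E]

lemma Phi_Tab (ends : E → Sym2 V) (A B : Finset E) :
    Phi (Tab ends A B) = ∑ F ∈ Finset.univ.filter (fun F : Finset E => A ⊆ F ∧ F ∩ B = ∅),
      MvPolynomial.monomial (chi F) (Polynomial.X ^ kComp ends F : Polynomial ℤ) := by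
  rw [Tab, map_sum]
  exact Finset.sum_congr rfl fun F _ => Phi_C_xF_mul_X_pow F _

lemma monCoeff_Tab_mul (ends : E → Sym2 V) (A B A' B' : Finset E) (lam : E →₀ ℕ) :
    monCoeff (Tab ends A B * Tab ends A' B') lam =
      ∑ F₁ ∈ Finset.univ.filter (fun F : Finset E => A ⊆ F ∧ F ∩ B = ∅),
        ∑ F₂ ∈ Finset.univ.filter (fun F : Finset E => A' ⊆ F ∧ F ∩ B' = ∅),
          if chi F₁ + chi F₂ = lam
          then (Polynomial.X : Polynomial ℤ) ^ (kComp ends F₁ + kComp ends F₂) else 0 := by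
  rw [monCoeff_eq, map_mul, Phi_Tab, Phi_Tab, Finset.sum_mul_sum, MvPolynomial.coeff_sum]
  refine Finset.sum_congr rfl fun F₁ _ => ?_
  rw [MvPolynomial.coeff_sum]
  refine Finset.sum_congr rfl fun F₂ _ => ?_
  rw [MvPolynomial.monomial_mul, ← pow_add, MvPolynomial.coeff_monomial]

end Stmt8Aux
/-- if `g ∈ E^{ef}` is parallel to `e` or to `f` and `λ(g) = 2`, then the
coefficient of `x^λ` in `D` (an element of `ℤ[q]`) vanishes. -/
theorem stmt8 {V E : Type*} [Fintype V] [Fintype E] [DecidableEq E]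
    (ends : E → Sym2 V) (e f : E) (hef : e ≠ f)
    (g : E) (hg : g ∈ Eef e f) (hpar : ends g = ends e ∨ ends g = ends f)
    (lam : E → ℕ) (hlam : lam g = 2) :
    monCoeff (Dpoly ends e f) (Finsupp.equivFunOnFinite.symm lam) = 0 := by
  classical
  have hge : g ≠ e := by
    intro h; subst h; simp [Eef] at hg
  have hgf : g ≠ f := by
    intro h; subst h; simp [Eef] at hg
  set lam' : E →₀ ℕ := Finsupp.equivFunOnFinite.symm lam with hlam'
  have hlg : lam' g = 2 := by simpa [hlam'] using hlam
  rw [Dpoly, show Tab ends {e} {f} * Tab ends {f} {e} - Tab ends {e, f} ∅ * Tab ends ∅ {e, f}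
      = Tab ends {e} {f} * Tab ends {f} {e} - Tab ends {e, f} ∅ * Tab ends ∅ {e, f} from rfl]
  rw [monCoeff_eq, map_sub, MvPolynomial.coeff_sub, ← monCoeff_eq, ← monCoeff_eq,
    monCoeff_Tab_mul, monCoeff_Tab_mul, sub_eq_zero,
    ← Finset.sum_product', ← Finset.sum_product', ← Finset.sum_filter, ← Finset.sum_filter]
  -- unpack memberships
  have hmem1 : ∀ p : Finset E × Finset E,
      p ∈ ((Finset.univ.filter (fun F : Finset E => {e} ⊆ F ∧ F ∩ {f} = ∅)) ×ˢ
          (Finset.univ.filter (fun F : Finset E => {f} ⊆ F ∧ F ∩ {e} = ∅))).filter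
          (fun p => chi p.1 + chi p.2 = lam') ↔
        (e ∈ p.1 ∧ f ∉ p.1 ∧ f ∈ p.2 ∧ e ∉ p.2 ∧ chi p.1 + chi p.2 = lam') := by
    intro p
    simp only [Finset.mem_filter, Finset.mem_product, Finset.mem_univ, true_and,
      Finset.singleton_subset_iff, ← Finset.disjoint_iff_inter_eq_empty,
      Finset.disjoint_singleton_right]
    tauto
  have hmem2 : ∀ p : Finset E × Finset E,
      p ∈ ((Finset.univ.filter (fun F : Finset E => {e, f} ⊆ F ∧ F ∩ (∅ : Finset E) = ∅)) ×ˢ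
          (Finset.univ.filter (fun F : Finset E => (∅ : Finset E) ⊆ F ∧ F ∩ {e, f} = ∅))).filter
          (fun p => chi p.1 + chi p.2 = lam') ↔
        (e ∈ p.1 ∧ f ∈ p.1 ∧ e ∉ p.2 ∧ f ∉ p.2 ∧ chi p.1 + chi p.2 = lam') := by
    intro p
    simp only [Finset.mem_filter, Finset.mem_product, Finset.mem_univ, true_and,
      Finset.insert_subset_iff, Finset.singleton_subset_iff, Finset.inter_empty,
      Finset.empty_subset, ← Finset.disjoint_iff_inter_eq_empty,
      Finset.disjoint_insert_right, Finset.disjoint_singleton_right]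
    tauto
  -- `g` belongs to both components of any contributing pair
  have hgmem : ∀ F₁ F₂ : Finset E, chi F₁ + chi F₂ = lam' → g ∈ F₁ ∧ g ∈ F₂ := by
    intro F₁ F₂ h
    have h2 : chi F₁ g + chi F₂ g = 2 := by
      have := congrArg (fun d : E →₀ ℕ => d g) h
      simpa [hlg] using this
    rw [chi_apply, chi_apply] at h2
    by_cases h1 : g ∈ F₁ <;> by_cases h3 : g ∈ F₂ <;> simp_all
  rcases hpar with hpar | hpar
  · -- ends g = ends e : toggle `e`
    refine Finset.sum_nbij' (fun p => (insert e p.2, p.1.erase e))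
      (fun p => (insert e p.2, p.1.erase e)) ?_ ?_ ?_ ?_ ?_
    · intro p hp
      obtain ⟨he1, hf1, hf2, he2, hchi⟩ := (hmem1 p).mp hp
      obtain ⟨hg1, hg2⟩ := hgmem _ _ hchi
      refine (hmem2 _).mpr ⟨Finset.mem_insert_self _ _, Finset.mem_insert_of_mem hf2,
        ?_, fun hc => hf1 (Finset.mem_of_mem_erase hc), ?_⟩
      · simp [hef]
      · rw [chi_insert he2, ← hchi, chi_erase he1]
        abel
    · intro p hp
      obtain ⟨he1, hf1, he2, hf2, hchi⟩ := (hmem2 p).mp hp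
      refine (hmem1 _).mpr ⟨Finset.mem_insert_self _ _,
        by simp [hef.symm, hf2], Finset.mem_erase.mpr ⟨hef.symm, hf1⟩,
        fun hc => absurd rfl (Finset.mem_erase.mp hc).1, ?_⟩
      rw [chi_insert he2, ← hchi, chi_erase he1]
      abel
    · intro p hp
      obtain ⟨he1, hf1, hf2, he2, hchi⟩ := (hmem1 p).mp hp
      simp [Finset.insert_erase he1, Finset.erase_insert he2]
    · intro p hp
      obtain ⟨he1, hf1, he2, hf2, hchi⟩ := (hmem2 p).mp hp
      simp [Finset.insert_erase he1, Finset.erase_insert he2]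
    · intro p hp
      obtain ⟨he1, hf1, hf2, he2, hchi⟩ := (hmem1 p).mp hp
      obtain ⟨hg1, hg2⟩ := hgmem _ _ hchi
      rw [kComp_insert_of_mem ends hg2 hpar.symm,
        kComp_erase_of_mem ends hg1 hge hpar.symm, add_comm]
  · -- ends g = ends f : toggle `f`
    refine Finset.sum_nbij' (fun p => (insert f p.1, p.2.erase f))
      (fun p => (p.1.erase f, insert f p.2)) ?_ ?_ ?_ ?_ ?_
    · intro p hp
      obtain ⟨he1, hf1, hf2, he2, hchi⟩ := (hmem1 p).mp hp
      refine (hmem2 _).mpr ⟨Finset.mem_insert_of_mem he1, Finset.mem_insert_self _ _,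
        fun hc => he2 (Finset.mem_of_mem_erase hc),
        fun hc => absurd rfl (Finset.mem_erase.mp hc).1, ?_⟩
      rw [chi_insert hf1, ← hchi, chi_erase hf2]
      abel
    · intro p hp
      obtain ⟨he1, hf1, he2, hf2, hchi⟩ := (hmem2 p).mp hp
      refine (hmem1 _).mpr ⟨Finset.mem_erase.mpr ⟨hef, he1⟩,
        fun hc => absurd rfl (Finset.mem_erase.mp hc).1,
        Finset.mem_insert_self _ _, by simp [hef, he2], ?_⟩
      rw [chi_insert hf2, ← hchi, chi_erase hf1]
      abel
    · intro p hp
      obtain ⟨he1, hf1, hf2, he2, hchi⟩ := (hmem1 p).mp hp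
      simp [Finset.erase_insert hf1, Finset.insert_erase hf2]
    · intro p hp
      obtain ⟨he1, hf1, he2, hf2, hchi⟩ := (hmem2 p).mp hp
      simp [Finset.insert_erase hf1, Finset.erase_insert hf2]
    · intro p hp
      obtain ⟨he1, hf1, hf2, he2, hchi⟩ := (hmem1 p).mp hp
      obtain ⟨hg1, hg2⟩ := hgmem _ _ hchi
      rw [kComp_insert_of_mem ends hg1 hpar.symm,
        kComp_erase_of_mem ends hg2 hgf hpar.symm]
end
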